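/- arXiv:2209.11745 — 9 statements merged into one kernel-verified Lean document; each statement's English description precedes it below -/
import Mathlib

section
/- For any two models M and M̄ and any policy π ∈ Π, one has D_RL^2( M̄(π), M(π) ) ≤ 5 · D_RL^2( M(π), M̄(π) ); that is, D_H^2( P^{M̄}(π), P^M(π) ) + E_{o∼P^{M̄}(π)}[ ‖R^M(o) − R^{M̄}(o)‖_2^2 ] ≤ 5 · ( D_H^2( P^M(π), P^{M̄}(π) ) + E_{o∼P^M(π)}[ ‖R^M(o) − R^{M̄}(o)‖_2^2 ] ). -/
open MeasureTheory ProbabilityTheory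

noncomputable section

/-- Squared Hellinger distance between two measures, computed with respect to the
(dominating) measure `P + Q`. -/
def hellingerSq {Ω : Type*} [MeasurableSpace Ω] (P Q : Measure Ω) : ℝ :=
  ∫ x, (Real.sqrt ((P.rnDeriv (P + Q) x).toReal)
      - Real.sqrt ((Q.rnDeriv (P + Q) x).toReal)) ^ 2 ∂(P + Q)

/-- A model in the DMSO framework: a probability measure on observations for each policy,
together with a mean-reward function with values in `[0,1]^H` whose coordinates sum to at
most `1`. -/
structure Model (O : Type*) [MeasurableSpace O] (H : ℕ) (Pol : Type*) where
  P : Pol → Measure O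
  prob : ∀ π, IsProbabilityMeasure (P π)
  R : O → Fin H → ℝ
  measR : ∀ h, Measurable fun o => R o h
  R_nonneg : ∀ o h, 0 ≤ R o h
  R_le_one : ∀ o h, R o h ≤ 1
  sumR_le_one : ∀ o, ∑ h, R o h ≤ 1

variable {O : Type*} [MeasurableSpace O] {H : ℕ} {Pol : Type*}

/-- The divergence `D_RL²(M(π), M'(π))`. -/
def DRL2 (M M' : Model O H Pol) (π : Pol) : ℝ :=
  hellingerSq (M.P π) (M'.P π)
    + ∫ o, (∑ h, (M.R o h - M'.R o h) ^ 2) ∂(M.P π)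

/-- Lemma (diff-hellinger): `D_RL²` is almost symmetric,
`D_RL²(M̄(π), M(π)) ≤ 5 · D_RL²(M(π), M̄(π))`. -/
theorem DRL2_swap_le_five_mul
    [Fintype Pol] [Nonempty Pol] (hH : 1 ≤ H)
    (M Mbar : Model O H Pol) (π : Pol) :
    DRL2 Mbar M π ≤ 5 * DRL2 M Mbar π := by
  classical
  have hPprob := M.prob π
  have hQprob := Mbar.prob π
  set P : Measure O := M.P π with hP
  set Q : Measure O := Mbar.P π with hQ
  set μ : Measure O := P + Q with hμ
  set p : O → ℝ := fun x => (P.rnDeriv μ x).toReal with hp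
  set q : O → ℝ := fun x => (Q.rnDeriv μ x).toReal with hq
  set f : O → ℝ := fun o => ∑ h, (M.R o h - Mbar.R o h) ^ 2 with hf
  -- basic facts about f
  have hf_nonneg : ∀ o, 0 ≤ f o := fun o =>
    Finset.sum_nonneg fun h _ => sq_nonneg _
  have hf_le_two : ∀ o, f o ≤ 2 := by
    intro o
    have h1 : ∀ h : Fin H, (M.R o h - Mbar.R o h) ^ 2 ≤ M.R o h + Mbar.R o h := by
      intro h
      have hd : |M.R o h - Mbar.R o h| ≤ 1 := by
        rw [abs_le]
        constructor
        · nlinarith [M.R_nonneg o h, Mbar.R_le_one o h]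
        · nlinarith [Mbar.R_nonneg o h, M.R_le_one o h]
      have habs : |M.R o h - Mbar.R o h| ≤ M.R o h + Mbar.R o h := by
        rw [abs_le]
        constructor
        · nlinarith [M.R_nonneg o h, Mbar.R_nonneg o h]
        · nlinarith [M.R_nonneg o h, Mbar.R_nonneg o h]
      calc (M.R o h - Mbar.R o h) ^ 2 = |M.R o h - Mbar.R o h| * |M.R o h - Mbar.R o h| := by
            rw [sq, ← abs_mul_abs_self]
        _ ≤ 1 * (M.R o h + Mbar.R o h) := by
            apply mul_le_mul hd habs (abs_nonneg _)
            norm_num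
        _ = M.R o h + Mbar.R o h := one_mul _
    calc f o ≤ ∑ h, (M.R o h + Mbar.R o h) := Finset.sum_le_sum fun h _ => h1 h
      _ = (∑ h, M.R o h) + ∑ h, Mbar.R o h := Finset.sum_add_distrib
      _ ≤ 1 + 1 := add_le_add (M.sumR_le_one o) (Mbar.sumR_le_one o)
      _ = 2 := by norm_num
  have hf_meas : Measurable f := by
    apply Finset.measurable_sum
    intro h _
    exact ((M.measR h).sub (Mbar.measR h)).pow_const 2
  -- absolute continuity
  have hPμ : P ≪ μ := Measure.absolutelyContinuous_of_le (Measure.le_add_right le_rfl)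
  have hQμ : Q ≪ μ := Measure.absolutelyContinuous_of_le (Measure.le_add_left le_rfl)
  -- measurability of p, q
  have hp_meas : Measurable p := (Measure.measurable_rnDeriv P μ).ennreal_toReal
  have hq_meas : Measurable q := (Measure.measurable_rnDeriv Q μ).ennreal_toReal
  have hp_nonneg : ∀ x, 0 ≤ p x := fun x => ENNReal.toReal_nonneg
  have hq_nonneg : ∀ x, 0 ≤ q x := fun x => ENNReal.toReal_nonneg
  -- integrability
  have hp_int : Integrable p μ := Measure.integrable_toReal_rnDeriv
  have hq_int : Integrable q μ := Measure.integrable_toReal_rnDeriv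
  have hg_meas : Measurable fun x => (Real.sqrt (p x) - Real.sqrt (q x)) ^ 2 :=
    ((hp_meas.sqrt.sub hq_meas.sqrt).pow_const 2)
  have h2pq : Integrable (fun x => 2 * (p x + q x)) μ := by
    exact (hp_int.add hq_int).const_mul 2
  have hg_int : Integrable (fun x => (Real.sqrt (p x) - Real.sqrt (q x)) ^ 2) μ := by
    refine Integrable.mono' h2pq hg_meas.aestronglyMeasurable ?_
    refine Filter.Eventually.of_forall fun x => ?_
    rw [Real.norm_eq_abs, abs_of_nonneg (sq_nonneg _)]
    nlinarith [Real.sq_sqrt (hp_nonneg x), Real.sq_sqrt (hq_nonneg x),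
      Real.sqrt_nonneg (p x), Real.sqrt_nonneg (q x), sq_nonneg (Real.sqrt (p x) + Real.sqrt (q x))]
  have hfq_int : Integrable (fun x => f x * q x) μ :=
    hq_int.bdd_mul hf_meas.aestronglyMeasurable
      (c := 2) (Filter.Eventually.of_forall fun x => by rw [Real.norm_eq_abs, abs_of_nonneg (hf_nonneg x)]; exact hf_le_two x)
  have hfp_int : Integrable (fun x => f x * p x) μ :=
    hp_int.bdd_mul hf_meas.aestronglyMeasurable
      (c := 2) (Filter.Eventually.of_forall fun x => by rw [Real.norm_eq_abs, abs_of_nonneg (hf_nonneg x)]; exact hf_le_two x)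
  -- express the integrals of f wrt P and Q via μ
  have hintQ : ∫ o, f o ∂Q = ∫ x, q x * f x ∂μ := by
    rw [← MeasureTheory.integral_rnDeriv_smul hQμ (f := f)]
    simp [smul_eq_mul, hq]
  have hintP : ∫ o, f o ∂P = ∫ x, p x * f x ∂μ := by
    rw [← MeasureTheory.integral_rnDeriv_smul hPμ (f := f)]
    simp [smul_eq_mul, hp]
  -- Hellinger symmetry
  have hHsymm : hellingerSq Q P = hellingerSq P Q := by
    unfold hellingerSq
    rw [show Q + P = P + Q from add_comm Q P]
    congr 1
    funext x
    ring
  -- pointwise inequality: q * f ≤ 4 * (√p - √q)^2 + 2 * (p * f)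
  have hpoint : ∀ x, q x * f x ≤ 4 * (Real.sqrt (p x) - Real.sqrt (q x)) ^ 2 + 2 * (p x * f x) := by
    intro x
    have hsp := Real.sq_sqrt (hp_nonneg x)
    have hsq := Real.sq_sqrt (hq_nonneg x)
    set a := Real.sqrt (q x)
    set b := Real.sqrt (p x)
    have key : q x ≤ 2 * (b - a) ^ 2 + 2 * p x := by nlinarith [sq_nonneg (a - 2 * b)]
    have h1 : q x * f x ≤ (2 * (b - a) ^ 2 + 2 * p x) * f x :=
      mul_le_mul_of_nonneg_right key (hf_nonneg x)
    have h2 : (2 * (b - a) ^ 2 + 2 * p x) * f x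
        = 2 * (b - a) ^ 2 * f x + 2 * (p x * f x) := by ring
    have h3 : 2 * (b - a) ^ 2 * f x ≤ 4 * (b - a) ^ 2 := by
      nlinarith [sq_nonneg (b - a), hf_nonneg x, hf_le_two x]
    linarith
  -- integrate the pointwise inequality
  have hpf_int : Integrable (fun x => p x * f x) μ := by
    have := hfp_int
    simpa [mul_comm] using this
  have hqf_int : Integrable (fun x => q x * f x) μ := by
    have := hfq_int
    simpa [mul_comm] using this
  have hrhs_int : Integrable
      (fun x => 4 * (Real.sqrt (p x) - Real.sqrt (q x)) ^ 2 + 2 * (p x * f x)) μ := by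
    exact (hg_int.const_mul 4).add (hpf_int.const_mul 2)
  have hmain : ∫ x, q x * f x ∂μ
      ≤ 4 * (∫ x, (Real.sqrt (p x) - Real.sqrt (q x)) ^ 2 ∂μ) + 2 * (∫ x, p x * f x ∂μ) := by
    have h := integral_mono hqf_int hrhs_int hpoint
    rwa [integral_add (hg_int.const_mul 4) (hpf_int.const_mul 2),
      integral_const_mul, integral_const_mul] at h
  -- nonnegativity of the pieces
  have hD_nonneg : 0 ≤ ∫ x, (Real.sqrt (p x) - Real.sqrt (q x)) ^ 2 ∂μ :=
    integral_nonneg fun x => sq_nonneg _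
  have hB_nonneg : 0 ≤ ∫ x, p x * f x ∂μ :=
    integral_nonneg fun x => mul_nonneg (hp_nonneg x) (hf_nonneg x)
  -- assemble
  have hDRL : DRL2 M Mbar π = hellingerSq P Q + ∫ o, f o ∂P := rfl
  have hDRLbar : DRL2 Mbar M π = hellingerSq Q P + ∫ o, (∑ h, (Mbar.R o h - M.R o h) ^ 2) ∂Q := rfl
  have hfswap : (fun o => ∑ h, (Mbar.R o h - M.R o h) ^ 2) = f := by
    funext o
    exact Finset.sum_congr rfl fun h _ => by ring
  have hHdef : hellingerSq P Q = ∫ x, (Real.sqrt (p x) - Real.sqrt (q x)) ^ 2 ∂μ := rfl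
  rw [hDRLbar, hfswap, hHsymm, hDRL, hintQ, hintP, hHdef]
  linarith
end
end

section
/- For any two models M and M̄ and any policy π ∈ Π, one has | f^M(π) − f^{M̄}(π) | ≤ √(H+1) · D_RL( M(π), M̄(π) ); that is, | E_{o∼P^M(π)}[ Σ_{h=1}^H R^M_h(o) ] − E_{o∼P^{M̄}(π)}[ Σ_{h=1}^H R^{M̄}_h(o) ] | ≤ √( (H+1) · ( D_H^2( P^M(π), P^{M̄}(π) ) + E_{o∼P^M(π)}[ ‖R^M(o) − R^{M̄}(o)‖_2^2 ] ) ). -/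
open MeasureTheory ProbabilityTheory

open scoped ENNReal NNReal

section Helpers

variable {α : Type*} [MeasurableSpace α]

lemma myIntegrable {μ : Measure α} [IsFiniteMeasure μ] {f : α → ℝ}
    (hf : AEStronglyMeasurable f μ) {C : ℝ} (h : ∀ᵐ x ∂μ, |f x| ≤ C) :
    Integrable f μ :=
  (memLp_top_of_bound hf C (by simpa [Real.norm_eq_abs] using h)).integrable le_top

lemma myCS {μ : Measure α} [IsFiniteMeasure μ] {f g : α → ℝ}
    (hf : AEStronglyMeasurable f μ) (hg : AEStronglyMeasurable g μ)
    (hf0 : 0 ≤ᵐ[μ] f) (hg0 : 0 ≤ᵐ[μ] g)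
    {Cf Cg : ℝ} (hfb : ∀ᵐ x ∂μ, f x ≤ Cf) (hgb : ∀ᵐ x ∂μ, g x ≤ Cg) :
    ∫ x, f x * g x ∂μ ≤ Real.sqrt (∫ x, f x ^ 2 ∂μ) * Real.sqrt (∫ x, g x ^ 2 ∂μ) := by
  have h22 : (2:ℝ).HolderConjugate 2 := by
    exact Real.HolderConjugate.two_two
  have hfm : MemLp f (ENNReal.ofReal 2) μ := by
    refine MemLp.mono_exponent (memLp_top_of_bound hf (max Cf 0) ?_) le_top
    filter_upwards [hf0, hfb] with x h0 h1
    simpa [Real.norm_eq_abs, abs_of_nonneg h0] using le_max_of_le_left h1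
  have hgm : MemLp g (ENNReal.ofReal 2) μ := by
    refine MemLp.mono_exponent (memLp_top_of_bound hg (max Cg 0) ?_) le_top
    filter_upwards [hg0, hgb] with x h0 h1
    simpa [Real.norm_eq_abs, abs_of_nonneg h0] using le_max_of_le_left h1
  have key := MeasureTheory.integral_mul_le_Lp_mul_Lq_of_nonneg h22 hf0 hg0 hfm hgm
  have e1 : ∫ x, f x ^ (2:ℝ) ∂μ = ∫ x, f x ^ 2 ∂μ := by
    refine integral_congr_ae ?_
    filter_upwards [hf0] with x h0
    rw [show (2:ℝ) = ((2:ℕ):ℝ) by norm_num, Real.rpow_natCast]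
  have e2 : ∫ x, g x ^ (2:ℝ) ∂μ = ∫ x, g x ^ 2 ∂μ := by
    refine integral_congr_ae ?_
    filter_upwards [hg0] with x h0
    rw [show (2:ℝ) = ((2:ℕ):ℝ) by norm_num, Real.rpow_natCast]
  rw [e1, e2] at key
  calc ∫ x, f x * g x ∂μ ≤ (∫ x, f x ^ 2 ∂μ) ^ (1/(2:ℝ)) * (∫ x, g x ^ 2 ∂μ) ^ (1/(2:ℝ)) := key
    _ = _ := by
        rw [Real.sqrt_eq_rpow, Real.sqrt_eq_rpow]

lemma myJensen {μ : Measure α} [IsProbabilityMeasure μ] {f : α → ℝ}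
    (hf : AEStronglyMeasurable f μ) {C : ℝ} (hb : ∀ᵐ x ∂μ, |f x| ≤ C) :
    |∫ x, f x ∂μ| ≤ Real.sqrt (∫ x, f x ^ 2 ∂μ) := by
  have h1 : |∫ x, f x ∂μ| ≤ ∫ x, |f x| ∂μ := by
    simpa [Real.norm_eq_abs] using norm_integral_le_integral_norm (μ := μ) f
  have h2 : ∫ x, |f x| ∂μ = ∫ x, |f x| * 1 ∂μ := by simp
  have h3 := myCS (μ := μ) hf.norm aestronglyMeasurable_const
    (Filter.Eventually.of_forall fun x => norm_nonneg _)
    (Filter.Eventually.of_forall fun _ => zero_le_one)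
    (Cf := C) (Cg := 1) (by simpa [Real.norm_eq_abs] using hb) (Filter.Eventually.of_forall fun _ => le_rfl)
  have h4 : ∫ x, |f x| ^ 2 ∂μ = ∫ x, f x ^ 2 ∂μ := by simp [sq_abs]
  have h5 : ∫ x, (1:ℝ) ^ 2 ∂μ = 1 := by simp
  calc |∫ x, f x ∂μ| ≤ ∫ x, |f x| ∂μ := h1
    _ = ∫ x, |f x| * 1 ∂μ := h2
    _ ≤ Real.sqrt (∫ x, |f x| ^ 2 ∂μ) * Real.sqrt (∫ x, (1:ℝ) ^ 2 ∂μ) := by simpa [Real.norm_eq_abs] using h3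
    _ = Real.sqrt (∫ x, f x ^ 2 ∂μ) := by rw [h4, h5]; simp

end Helpers

noncomputable section

variable {O : Type*} [MeasurableSpace O] {H : ℕ} {Pol : Type*}

/-- The value `f^M(π)` of policy `π` in model `M`. -/
def Model.val (M : Model O H Pol) (π : Pol) : ℝ :=
  ∫ o, (∑ h, M.R o h) ∂(M.P π)

/-- Lemma (diff-reward): the value difference between two models is bounded by
`√(H+1) · D_RL(M(π), M̄(π))`. -/
theorem abs_val_sub_val_le_sqrt_DRL2
    [Fintype Pol] [Nonempty Pol] (hH : 1 ≤ H)
    (M Mbar : Model O H Pol) (π : Pol) :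
    |M.val π - Mbar.val π| ≤ Real.sqrt ((H + 1) * DRL2 M Mbar π) := by
    classical
  set P : Measure O := M.P π with hPdef
  set Q : Measure O := Mbar.P π with hQdef
  haveI hPp : IsProbabilityMeasure P := M.prob π
  haveI hQp : IsProbabilityMeasure Q := Mbar.prob π
  set μ : Measure O := P + Q with hμdef
  have hPμ : P ≪ μ := Measure.absolutelyContinuous_of_le (Measure.le_add_right le_rfl)
  have hQμ : Q ≪ μ := Measure.absolutelyContinuous_of_le (Measure.le_add_left le_rfl)
  -- densities
  set p : O → ℝ := fun o => (P.rnDeriv μ o).toReal with hpdef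
  set q : O → ℝ := fun o => (Q.rnDeriv μ o).toReal with hqdef
  set a : O → ℝ := fun o => Real.sqrt (p o) with hadef
  set b : O → ℝ := fun o => Real.sqrt (q o) with hbdef
  have hpm : Measurable p := (Measure.measurable_rnDeriv P μ).ennreal_toReal
  have hqm : Measurable q := (Measure.measurable_rnDeriv Q μ).ennreal_toReal
  have ham : Measurable a := hpm.sqrt
  have hbm : Measurable b := hqm.sqrt
  have hp0 : ∀ o, 0 ≤ p o := fun o => ENNReal.toReal_nonneg
  have hq0 : ∀ o, 0 ≤ q o := fun o => ENNReal.toReal_nonneg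
  have hp1 : ∀ᵐ o ∂μ, p o ≤ 1 := by
    filter_upwards [Measure.rnDeriv_le_one_of_le (Measure.le_add_right (le_refl P))] with o h
    simp only [Pi.one_apply] at h
    calc p o ≤ (1 : ℝ≥0∞).toReal := ENNReal.toReal_mono (by simp) h
      _ = 1 := by simp
  have hq1 : ∀ᵐ o ∂μ, q o ≤ 1 := by
    filter_upwards [Measure.rnDeriv_le_one_of_le (Measure.le_add_left (le_refl Q))] with o h
    simp only [Pi.one_apply] at h
    calc q o ≤ (1 : ℝ≥0∞).toReal := ENNReal.toReal_mono (by simp) h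
      _ = 1 := by simp
  have ha0 : ∀ o, 0 ≤ a o := fun o => Real.sqrt_nonneg _
  have hb0 : ∀ o, 0 ≤ b o := fun o => Real.sqrt_nonneg _
  have ha1 : ∀ᵐ o ∂μ, a o ≤ 1 := by
    filter_upwards [hp1] with o h; exact Real.sqrt_le_one.mpr h
  have hb1 : ∀ᵐ o ∂μ, b o ≤ 1 := by
    filter_upwards [hq1] with o h; exact Real.sqrt_le_one.mpr h
  have hip : ∫ o, p o ∂μ = 1 := by
    simpa using Measure.integral_toReal_rnDeriv hPμ
  have hiq : ∫ o, q o ∂μ = 1 := by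
    simpa using Measure.integral_toReal_rnDeriv hQμ
  have ha2 : ∀ o, a o ^ 2 = p o := fun o => Real.sq_sqrt (hp0 o)
  have hb2 : ∀ o, b o ^ 2 = q o := fun o => Real.sq_sqrt (hq0 o)
  -- rewards
  set r : O → ℝ := fun o => ∑ h, M.R o h with hrdef
  set rb : O → ℝ := fun o => ∑ h, Mbar.R o h with hrbdef
  have hrm : Measurable r := Finset.measurable_sum _ (fun h _ => M.measR h)
  have hrbm : Measurable rb := Finset.measurable_sum _ (fun h _ => Mbar.measR h)
  have hr0 : ∀ o, 0 ≤ r o := fun o => Finset.sum_nonneg fun h _ => M.R_nonneg o h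
  have hrb0 : ∀ o, 0 ≤ rb o := fun o => Finset.sum_nonneg fun h _ => Mbar.R_nonneg o h
  have hr1 : ∀ o, r o ≤ 1 := M.sumR_le_one
  have hrb1 : ∀ o, rb o ≤ 1 := Mbar.sumR_le_one
  set dR : Fin H → O → ℝ := fun h o => M.R o h - Mbar.R o h with hdRdef
  have hdRm : ∀ h, Measurable (dR h) := fun h => (M.measR h).sub (Mbar.measR h)
  have hdRb : ∀ h o, |dR h o| ≤ 1 := by
    intro h o
    rw [abs_le]
    constructor
    · have := M.R_nonneg o h; have := Mbar.R_le_one o h; simp only [hdRdef]; linarith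
    · have := M.R_le_one o h; have := Mbar.R_nonneg o h; simp only [hdRdef]; linarith
  have hdRint : ∀ h, Integrable (dR h) P :=
    fun h => myIntegrable (hdRm h).aestronglyMeasurable
      (Filter.Eventually.of_forall (hdRb h))
  have hdRsqint : ∀ h, Integrable (fun o => dR h o ^ 2) P := by
    intro h
    refine myIntegrable ((hdRm h).pow_const 2).aestronglyMeasurable (C := 1)
      (Filter.Eventually.of_forall fun o => ?_)
    rw [abs_of_nonneg (sq_nonneg _)]
    nlinarith [hdRb h o, sq_abs (dR h o), abs_nonneg (dR h o)]
  set Ah : Fin H → ℝ := fun h => ∫ o, dR h o ∂P with hAhdef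
  set Sh : Fin H → ℝ := fun h => ∫ o, dR h o ^ 2 ∂P with hShdef
  have hShnn : ∀ h, 0 ≤ Sh h := fun h => integral_nonneg fun o => sq_nonneg _
  have hAh : ∀ h, |Ah h| ≤ Real.sqrt (Sh h) := fun h =>
    myJensen (hdRm h).aestronglyMeasurable (Filter.Eventually.of_forall (hdRb h))
  -- integrability of rewards
  have hrint : Integrable r P := myIntegrable hrm.aestronglyMeasurable (C := 1)
    (Filter.Eventually.of_forall fun o => abs_le.mpr ⟨by linarith [hr0 o], hr1 o⟩)
  have hrbintP : Integrable rb P := myIntegrable hrbm.aestronglyMeasurable (C := 1)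
    (Filter.Eventually.of_forall fun o => abs_le.mpr ⟨by linarith [hrb0 o], hrb1 o⟩)
  -- decomposition
  set B : ℝ := ∫ o, rb o ∂P - ∫ o, rb o ∂Q with hBdef
  have hsplit : M.val π - Mbar.val π = (∑ h, Ah h) + B := by
    have h1 : M.val π = ∫ o, r o ∂P := rfl
    have h2 : Mbar.val π = ∫ o, rb o ∂Q := rfl
    have h3 : ∫ o, (r o - rb o) ∂P = ∫ o, r o ∂P - ∫ o, rb o ∂P :=
      integral_sub hrint hrbintP
    have h4 : ∫ o, (r o - rb o) ∂P = ∑ h, Ah h := by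
      have e : ∀ o, r o - rb o = ∑ h, dR h o := by
        intro o; simp only [hrdef, hrbdef, hdRdef, ← Finset.sum_sub_distrib]
      rw [integral_congr_ae (Filter.Eventually.of_forall e)]
      exact integral_finset_sum _ fun h _ => hdRint h
    rw [h1, h2, hBdef, ← h4, h3]; ring
  -- Hellinger part
  have hD2 : hellingerSq P Q = ∫ o, (a o - b o) ^ 2 ∂μ := rfl
  set D2 : ℝ := hellingerSq P Q with hD2def
  have hD2nn : 0 ≤ D2 := by
    rw [hD2]; exact integral_nonneg fun o => sq_nonneg _
  -- bound on B
  have hBP : ∫ o, rb o ∂P = ∫ o, p o * rb o ∂μ := by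
    rw [← MeasureTheory.integral_rnDeriv_smul hPμ (f := rb)]; simp [hpdef, smul_eq_mul]
  have hBQ : ∫ o, rb o ∂Q = ∫ o, q o * rb o ∂μ := by
    rw [← MeasureTheory.integral_rnDeriv_smul hQμ (f := rb)]; simp [hqdef, smul_eq_mul]
  have hint_p : Integrable p μ := myIntegrable hpm.aestronglyMeasurable (C := 1)
    (by filter_upwards [hp1] with o h; rw [abs_of_nonneg (hp0 o)]; exact h)
  have hint_q : Integrable q μ := myIntegrable hqm.aestronglyMeasurable (C := 1)
    (by filter_upwards [hq1] with o h; rw [abs_of_nonneg (hq0 o)]; exact h)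
  have hint_prb : Integrable (fun o => p o * rb o) μ :=
    myIntegrable (hpm.mul hrbm).aestronglyMeasurable (C := 1)
      (by filter_upwards [hp1] with o h
          rw [abs_of_nonneg (mul_nonneg (hp0 o) (hrb0 o))]
          calc p o * rb o ≤ 1 * 1 := mul_le_mul h (hrb1 o) (hrb0 o) zero_le_one
            _ = 1 := one_mul 1)
  have hint_qrb : Integrable (fun o => q o * rb o) μ :=
    myIntegrable (hqm.mul hrbm).aestronglyMeasurable (C := 1)
      (by filter_upwards [hq1] with o h
          rw [abs_of_nonneg (mul_nonneg (hq0 o) (hrb0 o))]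
          calc q o * rb o ≤ 1 * 1 := mul_le_mul h (hrb1 o) (hrb0 o) zero_le_one
            _ = 1 := one_mul 1)
  have hB_eq : B = ∫ o, (rb o - 1/2) * (p o - q o) ∂μ := by
    have e : ∀ o, (rb o - 1/2) * (p o - q o)
        = (p o * rb o - q o * rb o) - ((1/2) * p o - (1/2) * q o) := fun o => by ring
    have hint1 : Integrable (fun o => p o * rb o - q o * rb o) μ := hint_prb.sub hint_qrb
    have hint2 : Integrable (fun o => (1/2 : ℝ) * p o - (1/2 : ℝ) * q o) μ :=
      (hint_p.const_mul _).sub (hint_q.const_mul _)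
    have i3 := integral_sub hint1 hint2
    have i1 := integral_sub hint_prb hint_qrb
    have i2 := integral_sub (hint_p.const_mul (1/2 : ℝ)) (hint_q.const_mul (1/2 : ℝ))
    have hmain : ∫ o, (rb o - 1/2) * (p o - q o) ∂μ
        = (∫ o, p o * rb o ∂μ - ∫ o, q o * rb o ∂μ)
          - ((1/2) * ∫ o, p o ∂μ - (1/2) * ∫ o, q o ∂μ) := by
      rw [integral_congr_ae (Filter.Eventually.of_forall e), i3, i1, i2,
        integral_const_mul, integral_const_mul]
    rw [hmain, hip, hiq, hBdef, hBP, hBQ]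
    ring
  have habsid : ∀ᵐ o ∂μ, |p o - q o| = |a o - b o| * (a o + b o) := by
    refine Filter.Eventually.of_forall fun o => ?_
    calc |p o - q o| = |(a o - b o) * (a o + b o)| := by
          rw [← ha2 o, ← hb2 o]; ring_nf
      _ = |a o - b o| * |a o + b o| := abs_mul _ _
      _ = |a o - b o| * (a o + b o) := by
          rw [abs_of_nonneg (add_nonneg (ha0 o) (hb0 o))]
  have hint_pq_abs : Integrable (fun o => |p o - q o|) μ := (hint_p.sub hint_q).abs
  have hint_prod : Integrable (fun o => (rb o - 1/2) * (p o - q o)) μ :=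
    ((hint_p.sub hint_q).bdd_mul
      (hrbm.sub measurable_const).aestronglyMeasurable
      (c := 1/2) (Filter.Eventually.of_forall fun o => by
        rw [Real.norm_eq_abs]
        exact abs_le.mpr ⟨by linarith [hrb0 o], by linarith [hrb1 o]⟩))
  have hBabs : |B| ≤ (1/2) * ∫ o, |p o - q o| ∂μ := by
    rw [hB_eq]
    calc |∫ o, (rb o - 1/2) * (p o - q o) ∂μ|
        ≤ ∫ o, |(rb o - 1/2) * (p o - q o)| ∂μ := by
          simpa only [Real.norm_eq_abs] using
            norm_integral_le_integral_norm (μ := μ) (f := fun o => (rb o - 1/2) * (p o - q o))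
      _ ≤ ∫ o, (1/2) * |p o - q o| ∂μ := by
          refine integral_mono hint_prod.abs (hint_pq_abs.const_mul _) fun o => ?_
          rw [abs_mul]
          refine mul_le_mul_of_nonneg_right ?_ (abs_nonneg _)
          exact abs_le.mpr ⟨by linarith [hrb0 o], by linarith [hrb1 o]⟩
      _ = (1/2) * ∫ o, |p o - q o| ∂μ := integral_const_mul _ _
  have hCSab : ∫ o, |a o - b o| * (a o + b o) ∂μ
      ≤ Real.sqrt (∫ o, (a o - b o) ^ 2 ∂μ) * Real.sqrt (∫ o, (a o + b o) ^ 2 ∂μ) := by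
    have := myCS (μ := μ) (ham.sub hbm).norm.aestronglyMeasurable
      (ham.add hbm).aestronglyMeasurable
      (Filter.Eventually.of_forall fun o => abs_nonneg _)
      (Filter.Eventually.of_forall fun o => add_nonneg (ha0 o) (hb0 o))
      (Cf := 1) (Cg := 2)
      (by filter_upwards [ha1, hb1] with o h1 h2
          exact abs_le.mpr ⟨by simp only [Pi.sub_apply]; linarith [ha0 o, hb0 o], by simp only [Pi.sub_apply]; linarith [ha0 o, hb0 o]⟩)
      (by filter_upwards [ha1, hb1] with o h1 h2; simp only [Pi.add_apply]; linarith)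
    simpa [Real.norm_eq_abs, sq_abs] using this
  have hab4 : ∫ o, (a o + b o) ^ 2 ∂μ ≤ 4 := by
    have hmono : ∫ o, (a o + b o) ^ 2 ∂μ ≤ ∫ o, (2 * p o + 2 * q o) ∂μ := by
      refine integral_mono ?_ ((hint_p.const_mul 2).add (hint_q.const_mul 2)) fun o => ?_
      · refine myIntegrable ((ham.add hbm).pow_const 2).aestronglyMeasurable (C := 4)
          (by filter_upwards [ha1, hb1] with o h1 h2
              rw [abs_of_nonneg (sq_nonneg _)]
              nlinarith [ha0 o, hb0 o])
      · nlinarith [sq_nonneg (a o - b o), ha2 o, hb2 o]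
    have h4 : ∫ o, (2 * p o + 2 * q o) ∂μ = 4 := by
      rw [integral_add (hint_p.const_mul 2) (hint_q.const_mul 2),
        integral_const_mul, integral_const_mul, hip, hiq]
      norm_num
    linarith
  have hB_final : |B| ≤ Real.sqrt D2 := by
    have h1 : ∫ o, |p o - q o| ∂μ = ∫ o, |a o - b o| * (a o + b o) ∂μ :=
      integral_congr_ae habsid
    have h2 : Real.sqrt (∫ o, (a o + b o) ^ 2 ∂μ) ≤ 2 := by
      calc Real.sqrt (∫ o, (a o + b o) ^ 2 ∂μ) ≤ Real.sqrt 4 := Real.sqrt_le_sqrt hab4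
        _ = 2 := by
          rw [show (4:ℝ) = 2^2 by norm_num, Real.sqrt_sq (by norm_num : (0:ℝ) ≤ 2)]
    calc |B| ≤ (1/2) * ∫ o, |p o - q o| ∂μ := hBabs
      _ = (1/2) * ∫ o, |a o - b o| * (a o + b o) ∂μ := by rw [h1]
      _ ≤ (1/2) * (Real.sqrt (∫ o, (a o - b o) ^ 2 ∂μ) * Real.sqrt (∫ o, (a o + b o) ^ 2 ∂μ)) := by
          linarith [hCSab]
      _ ≤ (1/2) * (Real.sqrt (∫ o, (a o - b o) ^ 2 ∂μ) * 2) := by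
          have := mul_le_mul_of_nonneg_left h2
            (Real.sqrt_nonneg (∫ o, (a o - b o) ^ 2 ∂μ))
          linarith
      _ = Real.sqrt D2 := by rw [hD2]; ring
  -- total reward part
  have hS : ∫ o, (∑ h, dR h o ^ 2) ∂P = ∑ h, Sh h :=
    integral_finset_sum _ fun h _ => hdRsqint h
  -- assemble
  have htot : |M.val π - Mbar.val π| ≤ Real.sqrt D2 + ∑ h, Real.sqrt (Sh h) := by
    rw [hsplit]
    calc |(∑ h, Ah h) + B| ≤ |∑ h, Ah h| + |B| := abs_add_le _ _
      _ ≤ (∑ h, |Ah h|) + |B| := by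
          gcongr; exact Finset.abs_sum_le_sum_abs _ _
      _ ≤ (∑ h, Real.sqrt (Sh h)) + Real.sqrt D2 :=
          add_le_add (Finset.sum_le_sum fun h _ => hAh h) hB_final
      _ = Real.sqrt D2 + ∑ h, Real.sqrt (Sh h) := by ring
  -- finite Cauchy-Schwarz
  have key : (Real.sqrt D2 + ∑ h, Real.sqrt (Sh h)) ^ 2 ≤ (H + 1) * (D2 + ∑ h, Sh h) := by
    set g : Fin (H + 1) → ℝ := Fin.cons (Real.sqrt D2) (fun h => Real.sqrt (Sh h)) with hgdef
    have hsum : ∑ i, g i = Real.sqrt D2 + ∑ h, Real.sqrt (Sh h) := by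
      rw [hgdef, Fin.sum_cons]
    have hsumsq : ∑ i, g i ^ 2 = D2 + ∑ h, Sh h := by
      rw [hgdef, Fin.sum_univ_succ]
      simp only [Fin.cons_zero, Fin.cons_succ]
      rw [Real.sq_sqrt hD2nn]
      congr 1
      exact Finset.sum_congr rfl fun h _ => Real.sq_sqrt (hShnn h)
    have hcs := sq_sum_le_card_mul_sum_sq (s := (Finset.univ : Finset (Fin (H + 1)))) (f := g)
    rw [Finset.card_univ, Fintype.card_fin] at hcs
    rw [← hsum, ← hsumsq]
    calc (∑ i, g i) ^ 2 ≤ ((H + 1 : ℕ) : ℝ) * ∑ i, g i ^ 2 := by exact_mod_cast hcs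
      _ = ((H : ℝ) + 1) * ∑ i, g i ^ 2 := by push_cast; ring
  have hDRL : DRL2 M Mbar π = D2 + ∑ h, Sh h := by
    rw [← hS]
    rfl
  rw [hDRL]
  exact le_trans htot (Real.le_sqrt_of_sq_le key)
end
end

section
/- Let O be a finite nonempty set, let P* and P be probability mass functions on O, and let H ≥ 1. Let (o, r) be a random pair where o ∼ P* and, conditioned on o, the random vector r ∈ ℝ^H has conditional mean R*(o) and is conditionally σ²-sub-Gaussian, i.e. E[exp(⟨v, r − R*(o)⟩) | o] ≤ exp(σ²‖v‖_2²/2) for all v ∈ ℝ^H. Let R : O → ℝ^H satisfy ‖R(o) − R*(o)‖_2² ≤ D² for all o ∈ O, for some D > 0. Let η_p ∈ (0, 1/2) and η_r > 0 satisfy 2η_p + 2σ²η_r < 1, set c := η_r/(1 − 2η_p) and c′ := (1 − exp(−c(1 − 2σ²c)D²))/D². Then E[ (P(o)/P*(o))^{η_p} · exp( η_r·( ‖r − R*(o)‖_2² − ‖r − R(o)‖_2² ) ) ] ≤ 1 − η_p · D_H²(P, P*) − (1 − 2η_p) · c′ · E_{o∼P*}[ ‖R(o) − R*(o)‖_2²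 ]. -/
open MeasureTheory

noncomputable section

/-- Squared Hellinger distance between two probability mass functions on a finite set. -/
def hellingerSqPMF {O : Type*} [Fintype O] (P Q : O → ℝ) : ℝ :=
  ∑ o, (Real.sqrt (P o) - Real.sqrt (Q o)) ^ 2

/-- Chord bound for the convex function `x ↦ exp (-(β x))` on `[0, D2]`. -/
lemma exp_chord_aux {β x D2 : ℝ} (hD2 : 0 < D2) (hx0 : 0 ≤ x) (hxD : x ≤ D2) :
    Real.exp (-(β * x)) ≤ 1 - (1 - Real.exp (-(β * D2))) / D2 * x := by
  have ht0 : 0 ≤ x / D2 := div_nonneg hx0 hD2.le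
  have ht1 : x / D2 ≤ 1 := (div_le_one hD2).2 hxD
  have h := convexOn_exp.2 (Set.mem_univ (0 : ℝ)) (Set.mem_univ (-(β * D2)))
      (by linarith : (0:ℝ) ≤ 1 - x / D2) ht0 (by ring)
  have hxx : (1 - x / D2) • (0 : ℝ) + (x / D2) • (-(β * D2)) = -(β * x) := by
    rw [smul_zero, zero_add, smul_eq_mul, div_mul_eq_mul_div, div_eq_iff hD2.ne']
    ring
  rw [hxx, Real.exp_zero, smul_eq_mul, smul_eq_mul] at h
  calc Real.exp (-(β * x)) ≤ (1 - x / D2) * 1 + (x / D2) * Real.exp (-(β * D2)) := h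
    _ = 1 - (1 - Real.exp (-(β * D2))) / D2 * x := by field_simp; ring

/-- One-step estimation bound for Tempered Aggregation (key step in the proof of
Theorem vovk-finite): the tempered-posterior weight update factor has expectation at most
`1 − η_p·D_H²(P, P*) − (1 − 2η_p)·c′·E_{o∼P*}[‖R(o) − R*(o)‖²]`.
The joint law of `(o, r)` is modeled by the marginal pmf `P*` of `o` together with the
conditional laws `ν a` of `r` given `o = a`; `R*` is the conditional mean of `r` and the
conditional law is `σ²`-sub-Gaussian. -/
theorem tempered_aggregation_one_step
    {O : Type*} [Fintype O] [Nonempty O]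
    (Pstar P : O → ℝ)
    (hPstar_nonneg : ∀ a, 0 ≤ Pstar a) (hPstar_sum : ∑ a, Pstar a = 1)
    (hP_nonneg : ∀ a, 0 ≤ P a) (hP_sum : ∑ a, P a = 1)
    (H : ℕ) (hH : 1 ≤ H) (σ : ℝ)
    -- conditional law of the reward vector given the observation
    (ν : O → Measure (EuclideanSpace ℝ (Fin H)))
    (hν : ∀ a, IsProbabilityMeasure (ν a))
    -- conditional mean of the reward vector
    (Rstar : O → EuclideanSpace ℝ (Fin H))
    (hRstar : ∀ a, Rstar a = ∫ r, r ∂(ν a))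
    -- conditional sub-Gaussianity
    (hsubG : ∀ (a : O) (v : EuclideanSpace ℝ (Fin H)),
      ∫ r, Real.exp (inner ℝ v (r - Rstar a)) ∂(ν a) ≤ Real.exp (σ ^ 2 * ‖v‖ ^ 2 / 2))
    (R : O → EuclideanSpace ℝ (Fin H))
    (D : ℝ) (hD : 0 < D)
    (hRbound : ∀ a, ‖R a - Rstar a‖ ^ 2 ≤ D ^ 2)
    (ηp ηr : ℝ) (hηp_pos : 0 < ηp) (hηp_lt : ηp < 1 / 2) (hηr : 0 < ηr)
    (hcond : 2 * ηp + 2 * σ ^ 2 * ηr < 1)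
    (c c' : ℝ)
    (hc : c = ηr / (1 - 2 * ηp))
    (hc' : c' = (1 - Real.exp (-(c * (1 - 2 * σ ^ 2 * c) * D ^ 2))) / D ^ 2) :
    ∑ a, Pstar a *
        ∫ r, (P a / Pstar a) ^ ηp *
          Real.exp (ηr * (‖r - Rstar a‖ ^ 2 - ‖r - R a‖ ^ 2)) ∂(ν a)
      ≤ 1 - ηp * hellingerSqPMF P Pstar
          - (1 - 2 * ηp) * c' * ∑ a, Pstar a * ‖R a - Rstar a‖ ^ 2 := by
  have h2ηp : (0:ℝ) < 1 - 2 * ηp := by linarith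
  have hσ2 : (0:ℝ) ≤ σ ^ 2 := sq_nonneg σ
  have hcpos : 0 < c := by rw [hc]; positivity
  have hcη : c * (1 - 2 * ηp) = ηr := by rw [hc]; field_simp
  set β : ℝ := c * (1 - 2 * σ ^ 2 * c) with hβ
  -- per-observation bound
  have key : ∀ a, Pstar a *
      ∫ r, (P a / Pstar a) ^ ηp *
        Real.exp (ηr * (‖r - Rstar a‖ ^ 2 - ‖r - R a‖ ^ 2)) ∂(ν a)
      ≤ 2 * ηp * Real.sqrt (P a * Pstar a)
        + (1 - 2 * ηp) * (Pstar a * Real.exp (-(β * ‖R a - Rstar a‖ ^ 2))) := by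
    intro a
    rcases eq_or_lt_of_le (hPstar_nonneg a) with h0 | h0
    · rw [← h0]
      simp
    set d : ℝ := ‖R a - Rstar a‖ ^ 2 with hd
    have hd0 : 0 ≤ d := by positivity
    set u : ℝ := P a / Pstar a with hu
    have hu0 : 0 ≤ u := div_nonneg (hP_nonneg a) (hPstar_nonneg a)
    set v : EuclideanSpace ℝ (Fin H) := (2 * ηr) • (R a - Rstar a) with hv
    -- pointwise rewriting of the integrand
    have hptw : ∀ r : EuclideanSpace ℝ (Fin H),
        u ^ ηp * Real.exp (ηr * (‖r - Rstar a‖ ^ 2 - ‖r - R a‖ ^ 2))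
          = u ^ ηp * (Real.exp (-(ηr * d)) * Real.exp (inner ℝ v (r - Rstar a))) := by
      intro r
      congr 1
      rw [← Real.exp_add]
      congr 1
      have hsub : r - R a = (r - Rstar a) - (R a - Rstar a) := by abel
      have hnorm : ‖r - R a‖ ^ 2
          = ‖r - Rstar a‖ ^ 2 - 2 * (inner ℝ (r - Rstar a) (R a - Rstar a) : ℝ) + d := by
        rw [hsub, norm_sub_sq_real]
      have hinner : (inner ℝ v (r - Rstar a) : ℝ)
          = 2 * ηr * (inner ℝ (r - Rstar a) (R a - Rstar a) : ℝ) := by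
        rw [hv, real_inner_smul_left, real_inner_comm]
      rw [hnorm, hinner]; ring
    have hInt : ∫ r, (P a / Pstar a) ^ ηp *
          Real.exp (ηr * (‖r - Rstar a‖ ^ 2 - ‖r - R a‖ ^ 2)) ∂(ν a)
        = u ^ ηp * (Real.exp (-(ηr * d)) *
            ∫ r, Real.exp (inner ℝ v (r - Rstar a)) ∂(ν a)) := by
      rw [show (∫ r, (P a / Pstar a) ^ ηp *
          Real.exp (ηr * (‖r - Rstar a‖ ^ 2 - ‖r - R a‖ ^ 2)) ∂(ν a))
        = ∫ r, u ^ ηp * (Real.exp (-(ηr * d)) * Real.exp (inner ℝ v (r - Rstar a))) ∂(ν a)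
        from integral_congr_ae (Filter.Eventually.of_forall fun r => hptw r)]
      rw [integral_const_mul, integral_const_mul]
    have hnormv : ‖v‖ ^ 2 = 4 * ηr ^ 2 * d := by
      rw [hv, norm_smul]
      rw [Real.norm_eq_abs, abs_of_pos (by linarith : (0:ℝ) < 2 * ηr)]
      rw [mul_pow, hd]; ring
    have hsub1 : Real.exp (-(ηr * d)) * ∫ r, Real.exp (inner ℝ v (r - Rstar a)) ∂(ν a)
        ≤ Real.exp (-(ηr * d)) * Real.exp (σ ^ 2 * ‖v‖ ^ 2 / 2) :=
      mul_le_mul_of_nonneg_left (hsubG a v) (Real.exp_nonneg _)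
    have hsub2 : Real.exp (-(ηr * d)) * Real.exp (σ ^ 2 * ‖v‖ ^ 2 / 2)
        ≤ Real.exp (-(β * d)) ^ (1 - 2 * ηp) := by
      rw [← Real.exp_add, ← Real.exp_mul, Real.exp_le_exp, hnormv, hβ]
      have e1 : -(ηr * d) + σ ^ 2 * (4 * ηr ^ 2 * d) / 2
          = -(c * (1 - 2 * ηp) * d) + 2 * σ ^ 2 * c ^ 2 * (1 - 2 * ηp) ^ 2 * d := by
        rw [← hcη]; ring
      rw [e1]
      nlinarith [mul_nonneg (mul_nonneg (mul_nonneg hσ2 (sq_nonneg c)) hd0)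
        (mul_pos hηp_pos h2ηp).le]
    have hw0 : (0:ℝ) ≤ Real.exp (-(β * d)) ^ (1 - 2 * ηp) := by positivity
    have hrw : u ^ ηp = (u ^ ((1:ℝ)/2)) ^ (2 * ηp) := by
      rw [← Real.rpow_mul hu0]
      congr 1
      ring
    have hamgm : (u ^ ((1:ℝ)/2)) ^ (2 * ηp) * Real.exp (-(β * d)) ^ (1 - 2 * ηp)
        ≤ 2 * ηp * u ^ ((1:ℝ)/2) + (1 - 2 * ηp) * Real.exp (-(β * d)) :=
      Real.geom_mean_le_arith_mean2_weighted (by linarith) h2ηp.le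
        (Real.rpow_nonneg hu0 _) (Real.exp_nonneg _) (by ring)
    have hsqrt : Pstar a * u ^ ((1:ℝ)/2) = Real.sqrt (P a * Pstar a) := by
      rw [← Real.sqrt_eq_rpow, hu, Real.sqrt_div (hP_nonneg a),
        Real.sqrt_mul (hP_nonneg a), mul_comm, div_mul_eq_mul_div, mul_div_assoc,
        Real.div_sqrt]
    calc Pstar a * ∫ r, (P a / Pstar a) ^ ηp *
          Real.exp (ηr * (‖r - Rstar a‖ ^ 2 - ‖r - R a‖ ^ 2)) ∂(ν a)
        = Pstar a * (u ^ ηp * (Real.exp (-(ηr * d)) *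
            ∫ r, Real.exp (inner ℝ v (r - Rstar a)) ∂(ν a))) := by rw [hInt]
      _ ≤ Pstar a * (u ^ ηp * Real.exp (-(β * d)) ^ (1 - 2 * ηp)) := by
          apply mul_le_mul_of_nonneg_left _ (hPstar_nonneg a)
          exact mul_le_mul_of_nonneg_left (hsub1.trans hsub2) (Real.rpow_nonneg hu0 _)
      _ ≤ Pstar a * (2 * ηp * u ^ ((1:ℝ)/2) + (1 - 2 * ηp) * Real.exp (-(β * d))) := by
          apply mul_le_mul_of_nonneg_left _ (hPstar_nonneg a)
          rw [hrw]; exact hamgm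
      _ = 2 * ηp * Real.sqrt (P a * Pstar a)
          + (1 - 2 * ηp) * (Pstar a * Real.exp (-(β * d))) := by
          rw [mul_add, ← mul_assoc, mul_comm (Pstar a) (2 * ηp), mul_assoc, hsqrt]
          ring
  -- sum the per-observation bounds
  have hsum1 : ∑ a, Pstar a *
      ∫ r, (P a / Pstar a) ^ ηp *
        Real.exp (ηr * (‖r - Rstar a‖ ^ 2 - ‖r - R a‖ ^ 2)) ∂(ν a)
      ≤ 2 * ηp * ∑ a, Real.sqrt (P a * Pstar a)
        + (1 - 2 * ηp) * ∑ a, Pstar a * Real.exp (-(β * ‖R a - Rstar a‖ ^ 2)) := by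
    rw [Finset.mul_sum, Finset.mul_sum, ← Finset.sum_add_distrib]
    exact Finset.sum_le_sum fun a _ => key a
  -- Hellinger identity
  have hhel : ∑ a, Real.sqrt (P a * Pstar a) = 1 - hellingerSqPMF P Pstar / 2 := by
    have expand : ∀ a : O, (Real.sqrt (P a) - Real.sqrt (Pstar a)) ^ 2
        = P a + Pstar a - 2 * Real.sqrt (P a * Pstar a) := by
      intro a
      rw [sub_sq, Real.sq_sqrt (hP_nonneg a), Real.sq_sqrt (hPstar_nonneg a),
        Real.sqrt_mul (hP_nonneg a)]
      ring
    have : hellingerSqPMF P Pstar = 2 - 2 * ∑ a, Real.sqrt (P a * Pstar a) := by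
      rw [hellingerSqPMF, Finset.sum_congr rfl (fun a _ => expand a),
        Finset.sum_sub_distrib, Finset.sum_add_distrib, hP_sum, hPstar_sum,
        Finset.mul_sum]
      norm_num
    rw [this]; ring
  -- chord bound sum
  have hexp : ∑ a, Pstar a * Real.exp (-(β * ‖R a - Rstar a‖ ^ 2))
      ≤ 1 - c' * ∑ a, Pstar a * ‖R a - Rstar a‖ ^ 2 := by
    have hstep : ∀ a, Pstar a * Real.exp (-(β * ‖R a - Rstar a‖ ^ 2))
        ≤ Pstar a * (1 - c' * ‖R a - Rstar a‖ ^ 2) := by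
      intro a
      apply mul_le_mul_of_nonneg_left _ (hPstar_nonneg a)
      have := exp_chord_aux (β := β) (pow_pos hD 2) (sq_nonneg ‖R a - Rstar a‖) (hRbound a)
      rw [hc', hβ]
      rw [hβ] at this
      linarith [this]
    calc ∑ a, Pstar a * Real.exp (-(β * ‖R a - Rstar a‖ ^ 2))
        ≤ ∑ a, Pstar a * (1 - c' * ‖R a - Rstar a‖ ^ 2) :=
          Finset.sum_le_sum fun a _ => hstep a
      _ = 1 - c' * ∑ a, Pstar a * ‖R a - Rstar a‖ ^ 2 := by
          simp only [mul_sub, mul_one]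
          rw [Finset.sum_sub_distrib, hPstar_sum, Finset.mul_sum]
          congr 1
          apply Finset.sum_congr rfl
          intro a _
          ring
  have hS0 : 0 ≤ ∑ a, Pstar a * ‖R a - Rstar a‖ ^ 2 :=
    Finset.sum_nonneg fun a _ => mul_nonneg (hPstar_nonneg a) (sq_nonneg _)
  calc ∑ a, Pstar a *
      ∫ r, (P a / Pstar a) ^ ηp *
        Real.exp (ηr * (‖r - Rstar a‖ ^ 2 - ‖r - R a‖ ^ 2)) ∂(ν a)
      ≤ 2 * ηp * (1 - hellingerSqPMF P Pstar / 2)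
        + (1 - 2 * ηp) * (1 - c' * ∑ a, Pstar a * ‖R a - Rstar a‖ ^ 2) := by
        rw [← hhel]
        exact hsum1.trans (by
          have := mul_le_mul_of_nonneg_left hexp h2ηp.le
          linarith)
      _ = 1 - ηp * hellingerSqPMF P Pstar
          - (1 - 2 * ηp) * c' * ∑ a, Pstar a * ‖R a - Rstar a‖ ^ 2 := by ring
end
end

section
/- Let O be a finite nonempty set, let P and P* be probability mass functions on O, let ρ ≥ 0, and let P̃ : O → [0,∞) be a nonnegative function satisfying Σ_{o∈O} |P̃(o) − P(o)| ≤ ρ². Then E_{o∼P*}[ √( P̃(o)/P*(o) ) ] ≤ 1 − (1/2)·D_H²(P, P*) + ρ. -/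
noncomputable section

lemma sqrt_add_le' (a b : ℝ) (ha : 0 ≤ a) (hb : 0 ≤ b) :
    Real.sqrt (a + b) ≤ Real.sqrt a + Real.sqrt b := by
  rw [← Real.sqrt_sq (by positivity : (0:ℝ) ≤ Real.sqrt a + Real.sqrt b)]
  apply Real.sqrt_le_sqrt
  have h1 := Real.sq_sqrt ha
  have h2 := Real.sq_sqrt hb
  nlinarith [Real.sqrt_nonneg a, Real.sqrt_nonneg b]

/-- Key estimate for optimistic likelihood functions (Eq. (vovk-proof-optlike)): if `P̃`
is a nonnegative function with `Σ_o |P̃(o) − P(o)| ≤ ρ²`, then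
`E_{o∼P*}[√(P̃(o)/P*(o))] ≤ 1 − D_H²(P, P*)/2 + ρ`.
(Terms of the expectation with `P*(o) = 0` contribute zero.) -/
theorem optimistic_likelihood_sqrt_ratio_le
    {O : Type*} [Fintype O] [Nonempty O]
    (P Pstar : O → ℝ)
    (hP_nonneg : ∀ o, 0 ≤ P o) (hP_sum : ∑ o, P o = 1)
    (hPstar_nonneg : ∀ o, 0 ≤ Pstar o) (hPstar_sum : ∑ o, Pstar o = 1)
    (ρ : ℝ) (hρ : 0 ≤ ρ)
    (Ptilde : O → ℝ) (hPtilde_nonneg : ∀ o, 0 ≤ Ptilde o)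
    (hPtilde_close : ∑ o, |Ptilde o - P o| ≤ ρ ^ 2) :
    ∑ o, Pstar o * Real.sqrt (Ptilde o / Pstar o)
      ≤ 1 - (1 / 2) * hellingerSqPMF P Pstar + ρ := by
  -- rewrite LHS as ∑ √P̃ √P*
  have hLHS : ∑ o, Pstar o * Real.sqrt (Ptilde o / Pstar o)
      = ∑ o, Real.sqrt (Ptilde o) * Real.sqrt (Pstar o) := by
    refine Finset.sum_congr rfl fun o _ => ?_
    rw [Real.sqrt_div (hPtilde_nonneg o), mul_comm, div_mul_eq_mul_div, mul_div_assoc,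
      Real.div_sqrt]
  -- the Hellinger identity
  have hH : 1 - (1 / 2) * hellingerSqPMF P Pstar
      = ∑ o, Real.sqrt (P o) * Real.sqrt (Pstar o) := by
    have hterm : ∀ o, (Real.sqrt (P o) - Real.sqrt (Pstar o)) ^ 2
        = P o + Pstar o - 2 * (Real.sqrt (P o) * Real.sqrt (Pstar o)) := by
      intro o
      rw [sub_sq, Real.sq_sqrt (hP_nonneg o), Real.sq_sqrt (hPstar_nonneg o)]
      ring
    unfold hellingerSqPMF
    rw [Finset.sum_congr rfl (fun o _ => hterm o)]
    rw [Finset.sum_sub_distrib, Finset.sum_add_distrib, ← Finset.mul_sum, hP_sum, hPstar_sum]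
    ring
  -- Cauchy-Schwarz bound on the error term
  have hCS : ∑ o, Real.sqrt |Ptilde o - P o| * Real.sqrt (Pstar o) ≤ ρ := by
    have hsq : (∑ o, Real.sqrt |Ptilde o - P o| * Real.sqrt (Pstar o)) ^ 2
        ≤ (∑ o, |Ptilde o - P o|) * ∑ o, Pstar o := by
      have := Finset.sum_mul_sq_le_sq_mul_sq Finset.univ
        (fun o => Real.sqrt |Ptilde o - P o|) (fun o => Real.sqrt (Pstar o))
      simpa [Real.sq_sqrt (abs_nonneg _), Real.sq_sqrt (hPstar_nonneg _)] using this
    have hnn : 0 ≤ ∑ o, Real.sqrt |Ptilde o - P o| * Real.sqrt (Pstar o) :=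
      Finset.sum_nonneg fun o _ => mul_nonneg (Real.sqrt_nonneg _) (Real.sqrt_nonneg _)
    nlinarith [hsq, hPstar_sum, hPtilde_close]
  -- pointwise bound √P̃ ≤ √P + √|P̃ − P|
  have hpt : ∀ o, Real.sqrt (Ptilde o) ≤ Real.sqrt (P o) + Real.sqrt |Ptilde o - P o| := by
    intro o
    calc Real.sqrt (Ptilde o) ≤ Real.sqrt (P o + |Ptilde o - P o|) := by
          apply Real.sqrt_le_sqrt
          have := le_abs_self (Ptilde o - P o)
          linarith
      _ ≤ Real.sqrt (P o) + Real.sqrt |Ptilde o - P o| :=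
          sqrt_add_le' _ _ (hP_nonneg o) (abs_nonneg _)
  rw [hLHS, hH]
  calc ∑ o, Real.sqrt (Ptilde o) * Real.sqrt (Pstar o)
      ≤ ∑ o, (Real.sqrt (P o) + Real.sqrt |Ptilde o - P o|) * Real.sqrt (Pstar o) := by
        apply Finset.sum_le_sum
        intro o _
        exact mul_le_mul_of_nonneg_right (hpt o) (Real.sqrt_nonneg _)
    _ = (∑ o, Real.sqrt (P o) * Real.sqrt (Pstar o))
        + ∑ o, Real.sqrt |Ptilde o - P o| * Real.sqrt (Pstar o) := by
        rw [← Finset.sum_add_distrib]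
        exact Finset.sum_congr rfl fun o _ => by ring
    _ ≤ (∑ o, Real.sqrt (P o) * Real.sqrt (Pstar o)) + ρ := by linarith
end
end

section
/- For any three models M, M̄, M̂ and any policy π ∈ Π, the divergence D̃_RL satisfies the approximate triangle inequality D̃_RL( M(π), M̄(π) ) ≤ 3 · D̃_RL( M(π), M̂(π) ) + 3 · D̃_RL( M̄(π), M̂(π) ). -/
open MeasureTheory ProbabilityTheory

noncomputable section

/-- Total variation distance between two measures, computed with respect to the
(dominating) measure `P + Q`. -/
def tvDist {Ω : Type*} [MeasurableSpace Ω] (P Q : Measure Ω) : ℝ :=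
  (1 / 2) * ∫ x, |(P.rnDeriv (P + Q) x).toReal - (Q.rnDeriv (P + Q) x).toReal| ∂(P + Q)

variable {O : Type*} [MeasurableSpace O] {H : ℕ} {Pol : Type*}

/-- The divergence `D̃_RL(M(π), M'(π))`: total variation distance of observation laws plus
expected ℓ₁-distance of the mean-reward vectors. -/
def DRLtilde (M M' : Model O H Pol) (π : Pol) : ℝ :=
  tvDist (M.P π) (M'.P π)
    + ∫ o, (∑ h, |M.R o h - M'.R o h|) ∂(M.P π)

section Helpers

variable {Ω : Type*} [MeasurableSpace Ω]

/-- `tvDist` can be computed with respect to any dominating σ-finite measure. -/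
lemma tvDist_eq_aux (P Q μ : Measure Ω) [IsFiniteMeasure P] [IsFiniteMeasure Q]
    [SigmaFinite μ] (h : (P + Q) ≪ μ) :
    tvDist P Q = (1/2) * ∫ x, |(P.rnDeriv μ x).toReal - (Q.rnDeriv μ x).toReal| ∂μ := by
  have hP : P ≪ P + Q := Measure.absolutelyContinuous_of_le (Measure.le_add_right le_rfl)
  have hQ : Q ≪ P + Q := Measure.absolutelyContinuous_of_le (Measure.le_add_left le_rfl)
  have hPμ := Measure.rnDeriv_mul_rnDeriv (κ := μ) hP
  have hQμ := Measure.rnDeriv_mul_rnDeriv (κ := μ) hQ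
  have key := MeasureTheory.integral_rnDeriv_smul (μ := P + Q) (ν := μ) h
    (f := fun x => |(P.rnDeriv (P + Q) x).toReal - (Q.rnDeriv (P + Q) x).toReal|)
  rw [tvDist, ← key]
  congr 1
  refine integral_congr_ae ?_
  filter_upwards [hPμ, hQμ] with x hPx hQx
  simp only [Pi.mul_apply] at hPx hQx
  rw [← hPx, ← hQx, ENNReal.toReal_mul, ENNReal.toReal_mul, smul_eq_mul, ← sub_mul, abs_mul,
    abs_of_nonneg ENNReal.toReal_nonneg, mul_comm]

/-- Triangle inequality for `tvDist`. -/
lemma tvDist_triangle (P Q R : Measure Ω) [IsFiniteMeasure P] [IsFiniteMeasure Q]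
    [IsFiniteMeasure R] : tvDist P Q ≤ tvDist P R + tvDist R Q := by
  set μ := P + Q + R with hμ
  have hPQ : P + Q ≪ μ := Measure.absolutelyContinuous_of_le (Measure.le_add_right le_rfl)
  have hPR : P + R ≪ μ := Measure.absolutelyContinuous_of_le
    (add_le_add (Measure.le_add_right le_rfl) le_rfl)
  have hRQ : R + Q ≪ μ := by
    refine Measure.absolutelyContinuous_of_le (Measure.le_iff'.2 fun s => ?_)
    simp only [Measure.add_apply, hμ]
    rw [add_comm (R s)]
    exact add_le_add le_add_self le_rfl
  rw [tvDist_eq_aux P Q μ hPQ, tvDist_eq_aux P R μ hPR, tvDist_eq_aux R Q μ hRQ, ← mul_add]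
  have hiP : Integrable (fun x => (P.rnDeriv μ x).toReal) μ := Measure.integrable_toReal_rnDeriv
  have hiQ : Integrable (fun x => (Q.rnDeriv μ x).toReal) μ := Measure.integrable_toReal_rnDeriv
  have hiR : Integrable (fun x => (R.rnDeriv μ x).toReal) μ := Measure.integrable_toReal_rnDeriv
  have iPQ : Integrable (fun x => |(P.rnDeriv μ x).toReal - (Q.rnDeriv μ x).toReal|) μ :=
    (hiP.sub hiQ).abs
  have iPR : Integrable (fun x => |(P.rnDeriv μ x).toReal - (R.rnDeriv μ x).toReal|) μ :=
    (hiP.sub hiR).abs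
  have iRQ : Integrable (fun x => |(R.rnDeriv μ x).toReal - (Q.rnDeriv μ x).toReal|) μ :=
    (hiR.sub hiQ).abs
  have h1 : ∫ x, |(P.rnDeriv μ x).toReal - (Q.rnDeriv μ x).toReal| ∂μ
      ≤ ∫ x, (|(P.rnDeriv μ x).toReal - (R.rnDeriv μ x).toReal|
          + |(R.rnDeriv μ x).toReal - (Q.rnDeriv μ x).toReal|) ∂μ :=
    integral_mono iPQ (iPR.add iRQ) fun x => abs_sub_le _ _ _
  rw [integral_add iPR iRQ] at h1
  have : (0:ℝ) < 1/2 := by norm_num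
  nlinarith [h1]

/-- Change of measure: for a `[0,2]`-valued measurable function, expectations under two
probability measures differ by at most `2 * tvDist`. -/
lemma integral_le_integral_add_tvDist (P Q : Measure Ω) [IsProbabilityMeasure P]
    [IsProbabilityMeasure Q] {f : Ω → ℝ} (hf : Measurable f) (h0 : ∀ x, 0 ≤ f x)
    (h2 : ∀ x, f x ≤ 2) :
    ∫ x, f x ∂P ≤ ∫ x, f x ∂Q + 2 * tvDist P Q := by
  set ν := P + Q with hν
  have hP : P ≪ ν := Measure.absolutelyContinuous_of_le (Measure.le_add_right le_rfl)
  have hQ : Q ≪ ν := Measure.absolutelyContinuous_of_le (Measure.le_add_left le_rfl)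
  set p := fun x => (P.rnDeriv ν x).toReal with hp
  set q := fun x => (Q.rnDeriv ν x).toReal with hq
  have hfP : Integrable f P :=
    ⟨hf.aestronglyMeasurable, HasFiniteIntegral.of_bounded (C := 2)
      (ae_of_all _ fun x => by rw [Real.norm_eq_abs, abs_of_nonneg (h0 x)]; exact h2 x)⟩
  have hfQ : Integrable f Q :=
    ⟨hf.aestronglyMeasurable, HasFiniteIntegral.of_bounded (C := 2)
      (ae_of_all _ fun x => by rw [Real.norm_eq_abs, abs_of_nonneg (h0 x)]; exact h2 x)⟩
  have hip : Integrable p ν := Measure.integrable_toReal_rnDeriv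
  have hiq : Integrable q ν := Measure.integrable_toReal_rnDeriv
  have hipf : Integrable (fun x => p x • f x) ν :=
    (MeasureTheory.integrable_rnDeriv_smul_iff hP).2 hfP
  have hiqf : Integrable (fun x => q x • f x) ν :=
    (MeasureTheory.integrable_rnDeriv_smul_iff hQ).2 hfQ
  have eP : ∫ x, f x ∂P = ∫ x, p x • f x ∂ν :=
    (MeasureTheory.integral_rnDeriv_smul hP).symm
  have eQ : ∫ x, f x ∂Q = ∫ x, q x • f x ∂ν :=
    (MeasureTheory.integral_rnDeriv_smul hQ).symm
  have hintp : ∫ x, p x ∂ν = 1 := by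
    rw [hp]; rw [Measure.integral_toReal_rnDeriv hP]; simp
  have hintq : ∫ x, q x ∂ν = 1 := by
    rw [hq]; rw [Measure.integral_toReal_rnDeriv hQ]; simp
  have hpt : ∀ x, p x • f x - q x • f x ≤ (p x - q x) + |p x - q x| := by
    intro x
    rcases abs_cases (p x - q x) with ⟨h, _⟩ | ⟨h, _⟩ <;> rw [h] <;>
      simp only [smul_eq_mul] <;> nlinarith [h0 x, h2 x]
  have ipq : Integrable (fun x => p x - q x) ν := hip.sub hiq
  have ipqa : Integrable (fun x => |p x - q x|) ν := ipq.abs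
  have h1 : ∫ x, (p x • f x - q x • f x) ∂ν
      ≤ ∫ x, ((p x - q x) + |p x - q x|) ∂ν :=
    integral_mono (hipf.sub hiqf) (ipq.add ipqa) hpt
  rw [integral_sub hipf hiqf, integral_add ipq ipqa,
    integral_sub hip hiq, hintp, hintq] at h1
  have htv : tvDist P Q = (1/2) * ∫ x, |p x - q x| ∂ν := rfl
  rw [eP, eQ, htv]
  linarith [h1]

lemma tvDist_symm (P Q : Measure Ω) : tvDist P Q = tvDist Q P := by
  rw [tvDist, tvDist, add_comm Q P]
  congr 1
  exact integral_congr_ae (ae_of_all _ fun x => abs_sub_comm _ _)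

end Helpers

lemma gdef_meas (M M' : Model O H Pol) :
    Measurable (fun o => ∑ h, |M.R o h - M'.R o h|) :=
  Finset.measurable_sum _ fun h _ => ((M.measR h).sub (M'.measR h)).abs

lemma gdef_nonneg (M M' : Model O H Pol) (o : O) :
    0 ≤ ∑ h, |M.R o h - M'.R o h| :=
  Finset.sum_nonneg fun h _ => abs_nonneg _

lemma gdef_le_two (M M' : Model O H Pol) (o : O) :
    ∑ h, |M.R o h - M'.R o h| ≤ 2 := by
  have : ∀ h : Fin H, |M.R o h - M'.R o h| ≤ M.R o h + M'.R o h := by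
    intro h
    rw [abs_sub_le_iff]
    constructor <;> nlinarith [M.R_nonneg o h, M'.R_nonneg o h]
  calc ∑ h, |M.R o h - M'.R o h| ≤ ∑ h, (M.R o h + M'.R o h) :=
        Finset.sum_le_sum fun h _ => this h
    _ = (∑ h, M.R o h) + ∑ h, M'.R o h := Finset.sum_add_distrib
    _ ≤ 2 := by linarith [M.sumR_le_one o, M'.sumR_le_one o]

lemma gdef_integrable (M M' : Model O H Pol) (μ : Measure O) [IsFiniteMeasure μ] :
    Integrable (fun o => ∑ h, |M.R o h - M'.R o h|) μ :=
  ⟨(gdef_meas M M').aestronglyMeasurable, HasFiniteIntegral.of_bounded (C := 2)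
    (ae_of_all _ fun o => by
      rw [Real.norm_eq_abs, abs_of_nonneg (gdef_nonneg M M' o)]; exact gdef_le_two M M' o)⟩

/-- Lemma (tDTV-triangle): approximate triangle inequality for `D̃_RL`. -/
theorem DRLtilde_triangle
    [Fintype Pol] [Nonempty Pol] (hH : 1 ≤ H)
    (M Mbar Mhat : Model O H Pol) (π : Pol) :
    DRLtilde M Mbar π ≤ 3 * DRLtilde M Mhat π + 3 * DRLtilde Mbar Mhat π := by
  have iM := M.prob π; have iMb := Mbar.prob π; have iMh := Mhat.prob π
  set P := M.P π; set Pb := Mbar.P π; set Ph := Mhat.P π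
  have htv : tvDist P Pb ≤ tvDist P Ph + tvDist Ph Pb := tvDist_triangle P Pb Ph
  have hrt : ∫ o, (∑ h, |M.R o h - Mbar.R o h|) ∂P
      ≤ ∫ o, (∑ h, |M.R o h - Mhat.R o h|) ∂P
        + ∫ o, (∑ h, |Mhat.R o h - Mbar.R o h|) ∂P := by
    rw [← integral_add (gdef_integrable M Mhat P) (gdef_integrable Mhat Mbar P)]
    refine integral_mono (gdef_integrable M Mbar P)
      ((gdef_integrable M Mhat P).add (gdef_integrable Mhat Mbar P)) fun o => ?_
    rw [← Finset.sum_add_distrib]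
    exact Finset.sum_le_sum fun h _ => abs_sub_le _ _ _
  have hcm : ∫ o, (∑ h, |Mhat.R o h - Mbar.R o h|) ∂P
      ≤ ∫ o, (∑ h, |Mhat.R o h - Mbar.R o h|) ∂Pb + 2 * tvDist P Pb :=
    integral_le_integral_add_tvDist P Pb (gdef_meas Mhat Mbar)
      (gdef_nonneg Mhat Mbar) (gdef_le_two Mhat Mbar)
  have hflip : ∫ o, (∑ h, |Mhat.R o h - Mbar.R o h|) ∂Pb
      = ∫ o, (∑ h, |Mbar.R o h - Mhat.R o h|) ∂Pb := by
    congr 1; funext o; congr 1; funext h; exact abs_sub_comm _ _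
  have hsymm : tvDist Ph Pb = tvDist Pb Ph := tvDist_symm Ph Pb
  have hnn1 : 0 ≤ ∫ o, (∑ h, |M.R o h - Mhat.R o h|) ∂P :=
    integral_nonneg (gdef_nonneg M Mhat)
  have hnn2 : 0 ≤ ∫ o, (∑ h, |Mbar.R o h - Mhat.R o h|) ∂Pb :=
    integral_nonneg (gdef_nonneg Mbar Mhat)
  have htv1 : 0 ≤ tvDist P Ph := by
    rw [tvDist]
    have : 0 ≤ ∫ x, |(P.rnDeriv (P + Ph) x).toReal - (Ph.rnDeriv (P + Ph) x).toReal| ∂(P + Ph) :=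
      integral_nonneg fun x => abs_nonneg _
    linarith
  have htv2 : 0 ≤ tvDist Pb Ph := by
    rw [tvDist]
    have : 0 ≤ ∫ x, |(Pb.rnDeriv (Pb + Ph) x).toReal - (Ph.rnDeriv (Pb + Ph) x).toReal| ∂(Pb + Ph) :=
      integral_nonneg fun x => abs_nonneg _
    linarith
  rw [DRLtilde, DRLtilde, DRLtilde]
  rw [hflip] at hcm
  have hcm2 : ∫ o, (∑ h, |Mhat.R o h - Mbar.R o h|) ∂P
      ≤ ∫ o, (∑ h, |Mbar.R o h - Mhat.R o h|) ∂Pb + 2 * (tvDist P Ph + tvDist Ph Pb) := by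
    linarith
  linarith [htv, hrt, hcm2, hsymm.le, hsymm.ge]
end
end

section
/- Let X be a nonempty set, let d ≥ 1, and let φ : X → ℝ^d. Then for every γ > 0 and every finitely supported probability distribution ν on ℝ^d × X, E_{(θ,x)∼ν}[ |⟨θ, φ(x)⟩| ] − γ · E_{θ∼ν} E_{x∼ν}[ ⟨θ, φ(x)⟩² ] ≤ d/(4γ), where in the second expectation θ and x are drawn independently from the two marginals of ν. In other words, the linear function class F = { x ↦ ⟨θ, φ(x)⟩ : θ ∈ ℝ^d } satisfies the decoupling coefficient bound dc(F, γ) ≤ d/(4γ). -/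
noncomputable section

lemma dc_abs_le_quad (γ a b c : ℝ) (hγ : 0 < γ)
    (h1 : 0 ≤ γ ^ 2 * a + 2 * (γ * -(1 / 2)) * c + (-(1 / 2)) ^ 2 * b)
    (h2 : 0 ≤ γ ^ 2 * a + 2 * (γ * (1 / 2)) * c + (1 / 2) ^ 2 * b) :
    |c| ≤ γ * a + b / (4 * γ) := by
  have h4 : (0:ℝ) < 4 * γ := by positivity
  rw [abs_le]
  constructor
  · have h : -c - γ * a ≤ b / (4 * γ) := by
      rw [le_div_iff₀ h4]; nlinarith [h2]
    linarith
  · have h : c - γ * a ≤ b / (4 * γ) := by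
      rw [le_div_iff₀ h4]; nlinarith [h1]
    linarith

lemma dc_aux
    {X : Type*} (d : ℕ)
    (φ : X → EuclideanSpace ℝ (Fin d))
    (γ : ℝ) (hγ : 0 < γ)
    (s : Finset (EuclideanSpace ℝ (Fin d) × X))
    (w : EuclideanSpace ℝ (Fin d) × X → ℝ)
    (hw_nonneg : ∀ p ∈ s, 0 ≤ w p)
    (ε : ℝ) (hε : 0 < ε) :
    (∑ p ∈ s, w p * |(inner ℝ p.1 (φ p.2) : ℝ)|)
      ≤ γ * ∑ p ∈ s, ∑ q ∈ s, w p * w q * (inner ℝ p.1 (φ q.2) : ℝ) ^ 2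
        + (d : ℝ) / (4 * γ) + ε * (γ * ∑ p ∈ s, w p * ‖p.1‖ ^ 2) := by
  classical
  set T : EuclideanSpace ℝ (Fin d) →ₗ[ℝ] EuclideanSpace ℝ (Fin d) :=
    (∑ q ∈ s, w q • LinearMap.smulRight (innerSL ℝ (φ q.2)).toLinearMap (φ q.2))
      + ε • LinearMap.id with hTdef
  have hT : ∀ v : EuclideanSpace ℝ (Fin d), T v = (∑ q ∈ s, w q • ((inner ℝ (φ q.2) v : ℝ) • φ q.2)) + ε • v := by
    intro v
    simp [hTdef, LinearMap.sum_apply]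
  -- the associated bilinear form
  set B : EuclideanSpace ℝ (Fin d) → EuclideanSpace ℝ (Fin d) → ℝ := fun u v =>
    (∑ q ∈ s, w q * ((inner ℝ (φ q.2) u : ℝ) * (inner ℝ (φ q.2) v : ℝ))) + ε * (inner ℝ u v : ℝ)
    with hBdef
  have hB : ∀ u v : EuclideanSpace ℝ (Fin d), (inner ℝ u (T v) : ℝ) = B u v := by
    intro u v
    rw [hT, inner_add_right, inner_sum]
    simp only [real_inner_smul_right, hBdef]
    congr 1
    exact Finset.sum_congr rfl fun q _ => by rw [real_inner_comm u (φ q.2)]; ring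
  have hBpos : ∀ v : EuclideanSpace ℝ (Fin d), 0 ≤ B v v := by
    intro v
    apply add_nonneg
    · exact Finset.sum_nonneg fun q hq =>
        mul_nonneg (hw_nonneg q hq) (mul_self_nonneg _)
    · exact mul_nonneg hε.le real_inner_self_nonneg
  have hBexp : ∀ (a b : ℝ) (u v : EuclideanSpace ℝ (Fin d)),
      B (a • u + b • v) (a • u + b • v)
        = a ^ 2 * B u u + 2 * (a * b) * B u v + b ^ 2 * B v v := by
    intro a b u v
    simp only [hBdef, inner_add_left, inner_add_right, real_inner_smul_left,
      real_inner_smul_right]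
    rw [Finset.sum_congr rfl (fun q _ => show
        w q * ((a * (inner ℝ (φ q.2) u : ℝ) + b * (inner ℝ (φ q.2) v : ℝ))
            * (a * (inner ℝ (φ q.2) u : ℝ) + b * (inner ℝ (φ q.2) v : ℝ)))
          = a ^ 2 * (w q * ((inner ℝ (φ q.2) u : ℝ) * (inner ℝ (φ q.2) u : ℝ)))
            + (2 * (a * b) * (w q * ((inner ℝ (φ q.2) u : ℝ) * (inner ℝ (φ q.2) v : ℝ)))
            + b ^ 2 * (w q * ((inner ℝ (φ q.2) v : ℝ) * (inner ℝ (φ q.2) v : ℝ)))) from by ring),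
      Finset.sum_add_distrib, Finset.sum_add_distrib,
      ← Finset.mul_sum, ← Finset.mul_sum, ← Finset.mul_sum]
    rw [real_inner_comm v u]
    ring
  have hquad : ∀ u v : EuclideanSpace ℝ (Fin d), |B u v| ≤ γ * B u u + B v v / (4 * γ) := by
    intro u v
    have h1 := hBpos (γ • u + (-(1/2) : ℝ) • v)
    have h2 := hBpos (γ • u + ((1/2) : ℝ) • v)
    rw [hBexp] at h1 h2
    exact dc_abs_le_quad γ (B u u) (B v v) (B u v) hγ h1 h2
  -- T is bijective
  have hTinj : Function.Injective T := by
    intro u v huv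
    have h0 : T (u - v) = 0 := by rw [map_sub, huv, sub_self]
    by_contra hne
    have huv0 : u - v ≠ 0 := sub_ne_zero.mpr hne
    have : (0:ℝ) < B (u - v) (u - v) := by
      have h := hB (u - v) (u - v)
      rw [h0, inner_zero_right] at h
      have hnn : 0 ≤ ∑ q ∈ s, w q * ((inner ℝ (φ q.2) (u-v) : ℝ) * (inner ℝ (φ q.2) (u-v) : ℝ)) :=
        Finset.sum_nonneg fun q hq => mul_nonneg (hw_nonneg q hq) (mul_self_nonneg _)
      have hpos : 0 < ε * (inner ℝ (u-v) (u-v) : ℝ) :=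
        by
        have : (0:ℝ) < (inner ℝ (u-v) (u-v) : ℝ) := by
          rw [real_inner_self_eq_norm_sq]
          have := norm_pos_iff.mpr huv0
          positivity
        exact mul_pos hε this
      simp only [hBdef]
      linarith
    have h := hB (u - v) (u - v)
    rw [h0, inner_zero_right] at h
    linarith [this, h.symm]
  have hTbij : Function.Bijective T :=
    ⟨hTinj, (LinearMap.injective_iff_surjective).mp hTinj⟩
  set Teq : EuclideanSpace ℝ (Fin d) ≃ₗ[ℝ] EuclideanSpace ℝ (Fin d) := LinearEquiv.ofBijective T hTbij with hTeq
  have hTeqapp : ∀ v : EuclideanSpace ℝ (Fin d), Teq v = T v := fun v => rfl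
  have hTTinv : ∀ v : EuclideanSpace ℝ (Fin d), T (Teq.symm v) = v := fun v => by
    rw [← hTeqapp]; exact Teq.apply_symm_apply v
  set ψ : EuclideanSpace ℝ (Fin d) × X → EuclideanSpace ℝ (Fin d) := fun q => Teq.symm (φ q.2) with hψ
  have hψφ : ∀ q, T (ψ q) = φ q.2 := fun q => hTTinv _
  -- pointwise bound
  have hpoint : ∀ p ∈ s, |(inner ℝ p.1 (φ p.2) : ℝ)|
      ≤ γ * B p.1 p.1 + (inner ℝ (ψ p) (φ p.2) : ℝ) / (4 * γ) := by
    intro p _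
    have h1 : (inner ℝ p.1 (φ p.2) : ℝ) = B p.1 (ψ p) := by rw [← hψφ p, hB]
    have h2 : (inner ℝ (ψ p) (φ p.2) : ℝ) = B (ψ p) (ψ p) := by rw [← hψφ p, hB]
    rw [h1, h2]
    exact hquad p.1 (ψ p)
  -- trace bound : ∑ q w q ⟪ψ q, φ q.2⟫ ≤ d
  have key2 : ∑ q ∈ s, w q * (inner ℝ (ψ q) (φ q.2) : ℝ) ≤ (d : ℝ) := by
    set e : Fin d → EuclideanSpace ℝ (Fin d) := fun i => EuclideanSpace.single i (1:ℝ) with he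
    have hcoord : ∀ (i : Fin d) (v : EuclideanSpace ℝ (Fin d)), (inner ℝ (e i) v : ℝ) = v i := by
      intro i v
      simp [he, EuclideanSpace.inner_single_left]
    have hid : ∀ i, Teq.symm (T (e i)) = e i := fun i => by
      rw [← hTeqapp]; exact Teq.symm_apply_apply (e i)
    have hdiag : ∀ i : Fin d, (1:ℝ)
        = ∑ q ∈ s, w q * ((φ q.2) i * (inner ℝ (e i) (ψ q) : ℝ))
          + ε * (inner ℝ (e i) (Teq.symm (e i)) : ℝ) := by
      intro i
      have h1 : (inner ℝ (e i) (Teq.symm (T (e i))) : ℝ) = 1 := by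
        rw [hid i, hcoord]
        simp [he, EuclideanSpace.single_apply]
      rw [← h1, hT (e i), map_add, map_sum]
      rw [inner_add_right, inner_sum]
      congr 1
      · refine Finset.sum_congr rfl fun q _ => ?_
        rw [map_smul, map_smul, real_inner_smul_right, real_inner_smul_right]
        rw [real_inner_comm (e i) (φ q.2), hcoord i (φ q.2)]
      · rw [map_smul, real_inner_smul_right]
    have hτ : 0 ≤ ∑ i : Fin d, (inner ℝ (e i) (Teq.symm (e i)) : ℝ) := by
      refine Finset.sum_nonneg fun i _ => ?_
      have h := hB (Teq.symm (e i)) (Teq.symm (e i))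
      rw [hTTinv (e i)] at h
      rw [real_inner_comm, h]
      exact hBpos _
    have hsum : (d : ℝ) = ∑ q ∈ s, w q * (inner ℝ (φ q.2) (ψ q) : ℝ)
        + ε * ∑ i : Fin d, (inner ℝ (e i) (Teq.symm (e i)) : ℝ) := by
      have h := Finset.sum_congr rfl (fun i (_ : i ∈ (Finset.univ : Finset (Fin d))) => hdiag i)
      rw [Finset.sum_const, Finset.card_univ, Fintype.card_fin, nsmul_eq_mul, mul_one] at h
      rw [h, Finset.sum_add_distrib, ← Finset.mul_sum, Finset.sum_comm]
      congr 1
      refine Finset.sum_congr rfl fun q _ => ?_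
      rw [← Finset.mul_sum]
      congr 1
      rw [PiLp.inner_apply]
      refine Finset.sum_congr rfl fun i _ => ?_
      rw [hcoord i (ψ q)]
      simp [RCLike.inner_apply, mul_comm]
    calc ∑ q ∈ s, w q * (inner ℝ (ψ q) (φ q.2) : ℝ)
        = ∑ q ∈ s, w q * (inner ℝ (φ q.2) (ψ q) : ℝ) := by
          exact Finset.sum_congr rfl fun q _ => by rw [real_inner_comm]
      _ ≤ (d : ℝ) := by
          rw [hsum]
          have : 0 ≤ ε * ∑ i : Fin d, (inner ℝ (e i) (Teq.symm (e i)) : ℝ) :=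
            mul_nonneg hε.le hτ
          linarith
  -- second moment identity
  have hmom : ∑ p ∈ s, w p * B p.1 p.1
      = (∑ p ∈ s, ∑ q ∈ s, w p * w q * (inner ℝ p.1 (φ q.2) : ℝ) ^ 2)
        + ε * ∑ p ∈ s, w p * ‖p.1‖ ^ 2 := by
    have hterm : ∀ p ∈ s, w p * B p.1 p.1
        = (∑ q ∈ s, w p * w q * (inner ℝ p.1 (φ q.2) : ℝ) ^ 2) + ε * (w p * ‖p.1‖ ^ 2) := by
      intro p _
      simp only [hBdef]
      rw [mul_add, Finset.mul_sum]
      congr 1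
      · exact Finset.sum_congr rfl fun q _ => by rw [real_inner_comm (φ q.2) p.1]; ring
      · rw [real_inner_self_eq_norm_sq]; ring
    rw [Finset.sum_congr rfl hterm, Finset.sum_add_distrib, ← Finset.mul_sum]
  calc ∑ p ∈ s, w p * |(inner ℝ p.1 (φ p.2) : ℝ)|
      ≤ ∑ p ∈ s, w p * (γ * B p.1 p.1 + (inner ℝ (ψ p) (φ p.2) : ℝ) / (4 * γ)) :=
        Finset.sum_le_sum fun p hp =>
          mul_le_mul_of_nonneg_left (hpoint p hp) (hw_nonneg p hp)
    _ = γ * (∑ p ∈ s, w p * B p.1 p.1)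
        + (∑ p ∈ s, w p * (inner ℝ (ψ p) (φ p.2) : ℝ)) / (4 * γ) := by
        rw [Finset.sum_congr rfl (fun p (_ : p ∈ s) => show
            w p * (γ * B p.1 p.1 + (inner ℝ (ψ p) (φ p.2) : ℝ) / (4 * γ))
              = γ * (w p * B p.1 p.1)
                + (w p * (inner ℝ (ψ p) (φ p.2) : ℝ)) / (4 * γ) from by ring),
          Finset.sum_add_distrib, ← Finset.mul_sum, ← Finset.sum_div]
    _ ≤ γ * ((∑ p ∈ s, ∑ q ∈ s, w p * w q * (inner ℝ p.1 (φ q.2) : ℝ) ^ 2)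
          + ε * ∑ p ∈ s, w p * ‖p.1‖ ^ 2) + (d : ℝ) / (4 * γ) := by
        rw [hmom]
        gcongr
    _ = γ * ∑ p ∈ s, ∑ q ∈ s, w p * w q * (inner ℝ p.1 (φ q.2) : ℝ) ^ 2
        + (d : ℝ) / (4 * γ) + ε * (γ * ∑ p ∈ s, w p * ‖p.1‖ ^ 2) := by ring

/-- Example (dc-linear): decoupling coefficient bound for a linear function class.
For any finitely supported distribution `ν` on `ℝ^d × X` (given by a finite set `s` of
atoms and weights `w`), the decoupled risk of the linear class
`F = { x ↦ ⟨θ, φ(x)⟩ }` is at most `d/(4γ)`. -/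
theorem decoupling_linear
    {X : Type*} [Nonempty X] (d : ℕ) (hd : 1 ≤ d)
    (φ : X → EuclideanSpace ℝ (Fin d))
    (γ : ℝ) (hγ : 0 < γ)
    (s : Finset (EuclideanSpace ℝ (Fin d) × X))
    (w : EuclideanSpace ℝ (Fin d) × X → ℝ)
    (hw_nonneg : ∀ p ∈ s, 0 ≤ w p)
    (hw_sum : ∑ p ∈ s, w p = 1) :
    (∑ p ∈ s, w p * |(inner ℝ p.1 (φ p.2) : ℝ)|)
      - γ * ∑ p ∈ s, ∑ q ∈ s, w p * w q * (inner ℝ p.1 (φ q.2) : ℝ) ^ 2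
      ≤ d / (4 * γ) := by
  set C : ℝ := γ * ∑ p ∈ s, w p * ‖p.1‖ ^ 2 with hC
  have hC0 : 0 ≤ C :=
    mul_nonneg hγ.le (Finset.sum_nonneg fun p hp =>
      mul_nonneg (hw_nonneg p hp) (by positivity))
  have main : ∀ ε : ℝ, 0 < ε →
      (∑ p ∈ s, w p * |(inner ℝ p.1 (φ p.2) : ℝ)|)
        - γ * ∑ p ∈ s, ∑ q ∈ s, w p * w q * (inner ℝ p.1 (φ q.2) : ℝ) ^ 2
        ≤ (d : ℝ) / (4 * γ) + ε * C := by
    intro ε hε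
    have h := dc_aux d φ γ hγ s w hw_nonneg ε hε
    rw [← hC] at h
    linarith
  refine le_of_forall_pos_le_add fun δ hδ => ?_
  have hpos : (0:ℝ) < δ / (C + 1) := by positivity
  have h := main (δ / (C + 1)) hpos
  have hle : δ / (C + 1) * C ≤ δ := by
    rw [div_mul_eq_mul_div, div_le_iff₀ (by positivity)]
    nlinarith
  linarith
end
end

section
/- Let X be a nonempty set, let d ≥ 1 and n ≥ 1, and let φ_1, …, φ_n : X → ℝ^d. Then for every γ > 0 and every finitely supported probability distribution ν on ℝ^d × X, E_{(θ,x)∼ν}[ max_{1≤i≤n} |⟨θ, φ_i(x)⟩| ] − γ · E_{θ∼ν} E_{x∼ν}[ ( max_{1≤i≤n} |⟨θ, φ_i(x)⟩| )² ] ≤ d/(4γ), where in the second expectation θ and x are drawn independently from the two marginals of ν. In other words, the function class F = { x ↦ max_i |⟨θ, φ_i(x)⟩| : θ ∈ ℝ^d } satisfies dc(F, γ) ≤ d/(4γ). -/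
noncomputable section

open Matrix

private lemma dcml_sum_mulVec {ι : Type*} {d : ℕ} (t : Finset ι)
    (f : ι → Matrix (Fin d) (Fin d) ℝ) (x : Fin d → ℝ) :
    (∑ i ∈ t, f i) *ᵥ x = ∑ i ∈ t, f i *ᵥ x := by
  ext j
  simp [Matrix.mulVec, dotProduct, Matrix.sum_apply, Finset.sum_mul]
  exact Finset.sum_comm

private lemma dcml_vecMulVec_mulVec {d : ℕ} (a x : Fin d → ℝ) :
    vecMulVec a a *ᵥ x = (a ⬝ᵥ x) • a := by
  ext i
  simp [Matrix.mulVec, Matrix.vecMulVec_apply, dotProduct, Finset.sum_mul]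
  exact Finset.sum_congr rfl fun j _ => by ring

private lemma dcml_trace_mul_vecMulVec {d : ℕ} (B : Matrix (Fin d) (Fin d) ℝ) (a : Fin d → ℝ) :
    (B * vecMulVec a a).trace = a ⬝ᵥ B *ᵥ a := by
  simp [Matrix.trace, Matrix.mul_apply, Matrix.vecMulVec_apply, dotProduct,
    Matrix.mulVec, Matrix.diag, Finset.mul_sum]
  exact Finset.sum_congr rfl fun i _ => Finset.sum_congr rfl fun j _ => by ring

private lemma dcml_dotProduct_sum {ι : Type*} {d : ℕ} (t : Finset ι)
    (x : Fin d → ℝ) (f : ι → Fin d → ℝ) :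
    x ⬝ᵥ (∑ i ∈ t, f i) = ∑ i ∈ t, x ⬝ᵥ f i := by
  simp [dotProduct, Finset.mul_sum, Finset.sum_apply]
  exact Finset.sum_comm

/-- generalized AM-GM via the positive definite matrix A. -/
private lemma dcml_key {d : ℕ} (A : Matrix (Fin d) (Fin d) ℝ) (hA : A.PosDef)
    (θ v : Fin d → ℝ) {γ : ℝ} (hγ : 0 < γ) :
    θ ⬝ᵥ v ≤ γ * (v ⬝ᵥ A *ᵥ v) + (1/(4*γ)) * (θ ⬝ᵥ A⁻¹ *ᵥ θ) := by
  have hAt : Aᵀ = A := by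
    rw [← conjTranspose_eq_transpose_of_trivial]; exact hA.isHermitian
  have hinv : A * A⁻¹ = 1 := mul_nonsing_inv A ((Matrix.isUnit_iff_isUnit_det A).1 hA.isUnit)
  have hsym : ∀ x y : Fin d → ℝ, x ⬝ᵥ A *ᵥ y = y ⬝ᵥ A *ᵥ x := by
    intro x y
    rw [dotProduct_mulVec, ← Matrix.mulVec_transpose, hAt, dotProduct_comm]
  set u := A⁻¹ *ᵥ θ with hu
  have hcross : u ⬝ᵥ A *ᵥ v = θ ⬝ᵥ v := by
    rw [hsym, hu, Matrix.mulVec_mulVec, hinv, Matrix.one_mulVec, dotProduct_comm]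
  have huu : u ⬝ᵥ A *ᵥ u = θ ⬝ᵥ A⁻¹ *ᵥ θ := by
    conv_lhs => rw [hsym, hu, Matrix.mulVec_mulVec, hinv, Matrix.one_mulVec]
    rw [dotProduct_comm]
  have ha : 0 ≤ v ⬝ᵥ A *ᵥ v := by simpa using hA.posSemidef.dotProduct_mulVec_nonneg v
  have hc : 0 ≤ θ ⬝ᵥ A⁻¹ *ᵥ θ := by simpa using hA.inv.posSemidef.dotProduct_mulVec_nonneg θ
  have hq : ∀ t : ℝ, 0 ≤ (v ⬝ᵥ A *ᵥ v) * (t * t) + (2 * (θ ⬝ᵥ v)) * t + (θ ⬝ᵥ A⁻¹ *ᵥ θ) := by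
    intro t
    have h0 : 0 ≤ (t • v + u) ⬝ᵥ A *ᵥ (t • v + u) := by
      simpa using hA.posSemidef.dotProduct_mulVec_nonneg (t • v + u)
    have hexp : (t • v + u) ⬝ᵥ A *ᵥ (t • v + u)
        = (v ⬝ᵥ A *ᵥ v) * (t * t) + (2 * (θ ⬝ᵥ v)) * t + (θ ⬝ᵥ A⁻¹ *ᵥ θ) := by
      rw [Matrix.mulVec_add, Matrix.mulVec_smul, dotProduct_add, add_dotProduct,
        add_dotProduct, dotProduct_smul, dotProduct_smul,
        smul_dotProduct, smul_dotProduct, huu, hcross]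
      rw [(hsym v u).trans hcross]
      simp [smul_eq_mul]
      ring
    rw [hexp] at h0; exact h0
  have hdisc := discrim_le_zero hq
  rw [discrim] at hdisc
  set a := v ⬝ᵥ A *ᵥ v
  set c := θ ⬝ᵥ A⁻¹ *ᵥ θ
  set b := θ ⬝ᵥ v
  have hb2 : b ^ 2 ≤ a * c := by nlinarith [hdisc]
  have h4 : 4*γ*b ≤ 4*γ^2*a + c := by
    nlinarith [hb2, sq_nonneg (4*γ^2*a - c), mul_pos hγ hγ, ha, hc,
      mul_nonneg (mul_nonneg hγ.le hγ.le) ha, mul_nonneg ha hc]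
  have hrw : γ*a + 1/(4*γ)*c = (4*γ^2*a + c)/(4*γ) := by field_simp
  rw [hrw, le_div_iff₀ (by positivity)]
  linarith
/-- Corollary (dc-linear-max (1)): decoupling coefficient bound for the class of maxima of
absolute values of linear functions. For any finitely supported distribution `ν` on
`ℝ^d × X` (given by a finite set `s` of atoms and weights `w`), the decoupled risk of the
class `F = { x ↦ max_i |⟨θ, φ_i(x)⟩| }` is at most `d/(4γ)`. -/
theorem decoupling_max_linear
    {X : Type*} [Nonempty X] (d : ℕ) (hd : 1 ≤ d) (n : ℕ) [NeZero n]
    (φ : Fin n → X → EuclideanSpace ℝ (Fin d))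
    (γ : ℝ) (hγ : 0 < γ)
    (s : Finset (EuclideanSpace ℝ (Fin d) × X))
    (w : EuclideanSpace ℝ (Fin d) × X → ℝ)
    (hw_nonneg : ∀ p ∈ s, 0 ≤ w p)
    (hw_sum : ∑ p ∈ s, w p = 1) :
    (∑ p ∈ s, w p * Finset.univ.sup' Finset.univ_nonempty
        (fun i : Fin n => |(inner ℝ p.1 (φ i p.2) : ℝ)|))
      - γ * ∑ p ∈ s, ∑ q ∈ s, w p * w q *
          (Finset.univ.sup' Finset.univ_nonempty
            (fun i : Fin n => |(inner ℝ p.1 (φ i q.2) : ℝ)|)) ^ 2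
      ≤ d / (4 * γ) := by
  classical
  set G : EuclideanSpace ℝ (Fin d) → X → ℝ := fun θ x =>
    Finset.univ.sup' Finset.univ_nonempty (fun i : Fin n => |(inner ℝ θ (φ i x) : ℝ)|) with hGdef
  show (∑ p ∈ s, w p * G p.1 p.2)
      - γ * ∑ p ∈ s, ∑ q ∈ s, w p * w q * (G p.1 q.2) ^ 2 ≤ (d : ℝ) / (4 * γ)
  set tvec : EuclideanSpace ℝ (Fin d) → (Fin d → ℝ) := fun θ j => θ j with htvec
  have hinner : ∀ θ y : EuclideanSpace ℝ (Fin d),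
      (inner ℝ θ y : ℝ) = tvec θ ⬝ᵥ tvec y := by
    intro θ y
    simp [PiLp.inner_apply, RCLike.inner_apply, dotProduct, htvec]
    exact Finset.sum_congr rfl fun j _ => mul_comm _ _
  -- choose witness vectors
  have hvex : ∀ p : EuclideanSpace ℝ (Fin d) × X, ∃ vv : Fin d → ℝ,
      G p.1 p.2 = tvec p.1 ⬝ᵥ vv ∧
      ∀ θ : EuclideanSpace ℝ (Fin d), |tvec θ ⬝ᵥ vv| ≤ G θ p.2 := by
    intro p
    obtain ⟨i, -, hi⟩ := Finset.exists_mem_eq_sup' Finset.univ_nonempty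
      (fun i : Fin n => |(inner ℝ p.1 (φ i p.2) : ℝ)|)
    rcases le_or_gt 0 (inner ℝ p.1 (φ i p.2) : ℝ) with h | h
    · refine ⟨tvec (φ i p.2), ?_, ?_⟩
      · rw [← hinner]
        exact hi.trans (abs_of_nonneg h)
      · intro θ
        rw [← hinner]
        exact Finset.le_sup' (fun i : Fin n => |(inner ℝ θ (φ i p.2) : ℝ)|) (Finset.mem_univ i)
    · refine ⟨-tvec (φ i p.2), ?_, ?_⟩
      · rw [dotProduct_neg, ← hinner]
        exact hi.trans (abs_of_neg h)
      · intro θ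
        rw [dotProduct_neg, abs_neg, ← hinner]
        exact Finset.le_sup' (fun i : Fin n => |(inner ℝ θ (φ i p.2) : ℝ)|) (Finset.mem_univ i)
  choose v hv1 hv2 using hvex
  -- second moment matrix
  set M : Matrix (Fin d) (Fin d) ℝ :=
    ∑ p ∈ s, w p • Matrix.vecMulVec (tvec p.1) (tvec p.1) with hM
  have hMherm : M.IsHermitian := by
    rw [Matrix.IsHermitian, Matrix.conjTranspose_eq_transpose_of_trivial]
    ext i j
    simp [hM, Matrix.transpose_apply, Matrix.sum_apply, Matrix.vecMulVec_apply, mul_comm]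
  have hMquad : ∀ x : Fin d → ℝ, x ⬝ᵥ M *ᵥ x = ∑ p ∈ s, w p * (tvec p.1 ⬝ᵥ x) ^ 2 := by
    intro x
    rw [hM, dcml_sum_mulVec]
    rw [dcml_dotProduct_sum]
    refine Finset.sum_congr rfl fun p _ => ?_
    rw [Matrix.smul_mulVec, dcml_vecMulVec_mulVec, smul_smul, dotProduct_smul,
      smul_eq_mul, dotProduct_comm x]
    ring
  have hMpsd : M.PosSemidef := by
    refine Matrix.PosSemidef.of_dotProduct_mulVec_nonneg hMherm fun x => ?_
    simp only [star_trivial]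
    rw [hMquad]
    exact Finset.sum_nonneg fun p hp => mul_nonneg (hw_nonneg p hp) (sq_nonneg _)
  set C : ℝ := ∑ p ∈ s, w p * (v p ⬝ᵥ v p) with hC
  have hC0 : 0 ≤ C :=
    Finset.sum_nonneg fun p hp => mul_nonneg (hw_nonneg p hp)
      (Finset.sum_nonneg fun j _ => mul_self_nonneg _)
  -- double sum rewrite
  have hD : (∑ p ∈ s, ∑ q ∈ s, w p * w q * (G p.1 q.2) ^ 2)
      = ∑ p ∈ s, w p * ∑ q ∈ s, w q * (G q.1 p.2) ^ 2 := by
    rw [Finset.sum_comm]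
    refine Finset.sum_congr rfl fun p _ => ?_
    rw [Finset.mul_sum]
    exact Finset.sum_congr rfl fun q _ => by ring
  refine le_of_forall_pos_le_add fun ε hε => ?_
  set ε' : ℝ := ε / (γ * (C + 1)) with hε'def
  have hε' : 0 < ε' := div_pos hε (by positivity)
  set A : Matrix (Fin d) (Fin d) ℝ := M + ε' • 1 with hA
  have hApos : A.PosDef := by
    refine Matrix.PosDef.posSemidef_add hMpsd ?_
    rw [Matrix.smul_one_eq_diagonal]
    exact Matrix.PosDef.diagonal fun _ => hε'
  have hAdet : IsUnit A.det := (Matrix.isUnit_iff_isUnit_det A).1 hApos.isUnit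
  -- pointwise bound
  have step1 : ∀ p ∈ s, w p * G p.1 p.2
      ≤ γ * (w p * ∑ q ∈ s, w q * (G q.1 p.2) ^ 2)
        + γ * ε' * (w p * (v p ⬝ᵥ v p))
        + (1 / (4 * γ)) * (w p * (tvec p.1 ⬝ᵥ A⁻¹ *ᵥ tvec p.1)) := by
    intro p hp
    have hwp := hw_nonneg p hp
    have h1 : G p.1 p.2 ≤ γ * (v p ⬝ᵥ A *ᵥ v p)
        + (1 / (4 * γ)) * (tvec p.1 ⬝ᵥ A⁻¹ *ᵥ tvec p.1) := by
      rw [hv1 p]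
      exact dcml_key A hApos _ _ hγ
    have h2 : v p ⬝ᵥ A *ᵥ v p = v p ⬝ᵥ M *ᵥ v p + ε' * (v p ⬝ᵥ v p) := by
      rw [hA, Matrix.add_mulVec, dotProduct_add, Matrix.smul_mulVec,
        Matrix.one_mulVec, dotProduct_smul, smul_eq_mul]
    have h3 : v p ⬝ᵥ M *ᵥ v p ≤ ∑ q ∈ s, w q * (G q.1 p.2) ^ 2 := by
      rw [hMquad]
      refine Finset.sum_le_sum fun q hq => ?_
      refine mul_le_mul_of_nonneg_left ?_ (hw_nonneg q hq)
      calc (tvec q.1 ⬝ᵥ v p) ^ 2 = |tvec q.1 ⬝ᵥ v p| ^ 2 := (sq_abs _).symm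
        _ ≤ (G q.1 p.2) ^ 2 := pow_le_pow_left₀ (abs_nonneg _) (hv2 p q.1) 2
    calc w p * G p.1 p.2
        ≤ w p * (γ * (v p ⬝ᵥ A *ᵥ v p)
            + (1 / (4 * γ)) * (tvec p.1 ⬝ᵥ A⁻¹ *ᵥ tvec p.1)) :=
          mul_le_mul_of_nonneg_left h1 hwp
      _ = γ * (w p * (v p ⬝ᵥ M *ᵥ v p)) + γ * ε' * (w p * (v p ⬝ᵥ v p))
            + (1 / (4 * γ)) * (w p * (tvec p.1 ⬝ᵥ A⁻¹ *ᵥ tvec p.1)) := by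
          rw [h2]; ring
      _ ≤ _ := by
          have := mul_le_mul_of_nonneg_left (mul_le_mul_of_nonneg_left h3 hwp) hγ.le
          linarith
  -- trace bound
  have hT : ∑ p ∈ s, w p * (tvec p.1 ⬝ᵥ A⁻¹ *ᵥ tvec p.1) ≤ (d : ℝ) := by
    have h1 : ∑ p ∈ s, w p * (tvec p.1 ⬝ᵥ A⁻¹ *ᵥ tvec p.1) = (A⁻¹ * M).trace := by
      rw [hM, Matrix.mul_sum, Matrix.trace_sum]
      refine Finset.sum_congr rfl fun p _ => ?_
      rw [Matrix.mul_smul, Matrix.trace_smul, dcml_trace_mul_vecMulVec, smul_eq_mul]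
    have h2 : A⁻¹ * M = 1 - ε' • A⁻¹ := by
      have hMA : M = A - ε' • 1 := by rw [hA]; abel
      rw [hMA, Matrix.mul_sub, Matrix.nonsing_inv_mul A hAdet, Matrix.mul_smul, Matrix.mul_one]
    have h3 : 0 ≤ A⁻¹.trace := by
      refine Finset.sum_nonneg fun i _ => ?_
      have h4 := hApos.inv.posSemidef.dotProduct_mulVec_nonneg (Pi.single i 1)
      simpa [dotProduct, Matrix.mulVec, Pi.single_apply, Finset.sum_ite_eq,
        Finset.mul_sum] using h4
    rw [h1, h2, Matrix.trace_sub, Matrix.trace_one, Matrix.trace_smul]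
    simp only [smul_eq_mul, Fintype.card_fin]
    nlinarith [mul_nonneg hε'.le h3]
  -- epsilon bound
  have hεC : γ * ε' * C ≤ ε := by
    have hpos : (0:ℝ) < C + 1 := by linarith
    have hγ' : γ ≠ 0 := hγ.ne'
    have hC1 : C + 1 ≠ 0 := hpos.ne'
    calc γ * ε' * C = ε * (C / (C + 1)) := by rw [hε'def]; field_simp
      _ ≤ ε * 1 := mul_le_mul_of_nonneg_left (by rw [div_le_one hpos]; linarith) hε.le
      _ = ε := mul_one ε
  -- put it together
  have hS : ∑ p ∈ s, w p * G p.1 p.2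
      ≤ γ * ∑ p ∈ s, (w p * ∑ q ∈ s, w q * (G q.1 p.2) ^ 2)
        + γ * ε' * C + (1 / (4 * γ)) * ∑ p ∈ s, w p * (tvec p.1 ⬝ᵥ A⁻¹ *ᵥ tvec p.1) := by
    have := Finset.sum_le_sum step1
    rw [Finset.sum_add_distrib, Finset.sum_add_distrib, ← Finset.mul_sum, ← Finset.mul_sum,
      ← Finset.mul_sum] at this
    rw [hC]
    exact this
  have hc4 : (0:ℝ) ≤ 1 / (4 * γ) := by positivity
  have hTr := mul_le_mul_of_nonneg_left hT hc4
  have hfinal : (1 / (4 * γ)) * (d : ℝ) = (d : ℝ) / (4 * γ) := by ring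
  rw [hD]
  linarith
end
end

section
/- Let X be a nonempty set, let d ≥ 1 and n ≥ 1, and let φ_1, …, φ_n : X → ℝ^d. Then for every γ > 0 and every finitely supported probability distribution ν on ℝ^d × X, E_{(θ,x)∼ν}[ Σ_{i=1}^n |⟨θ, φ_i(x)⟩| ] − γ · E_{θ∼ν} E_{x∼ν}[ ( Σ_{i=1}^n |⟨θ, φ_i(x)⟩| )² ] ≤ d/(4γ), where in the second expectation θ and x are drawn independently from the two marginals of ν. In other words, the function class F = { x ↦ Σ_i |⟨θ, φ_i(x)⟩| : θ ∈ ℝ^d } satisfies dc(F, γ) ≤ d/(4γ). -/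
noncomputable section

open Matrix

private lemma quad_dot_le {d : ℕ} (γ : ℝ) (hγ : 0 < γ) {A : Matrix (Fin d) (Fin d) ℝ}
    (hA : A.PosDef) (θ v : Fin d → ℝ) :
    θ ⬝ᵥ v ≤ γ * (θ ⬝ᵥ A *ᵥ θ) + (1 / (4 * γ)) * (v ⬝ᵥ A⁻¹ *ᵥ v) := by
  have hdet : IsUnit A.det := (Matrix.isUnit_iff_isUnit_det A).1 hA.isUnit
  have hAA : A * A⁻¹ = 1 := Matrix.mul_nonsing_inv A hdet
  have hsym : Aᵀ = A := hA.isHermitian.eq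
  set u : Fin d → ℝ := (2 * γ) • θ - A⁻¹ *ᵥ v with hu
  have hAy : A *ᵥ (A⁻¹ *ᵥ v) = v := by
    rw [mulVec_mulVec, hAA, one_mulVec]
  have hAu : A *ᵥ u = (2 * γ) • (A *ᵥ θ) - v := by
    rw [hu, mulVec_sub, mulVec_smul, hAy]
  have h1 : (A⁻¹ *ᵥ v) ⬝ᵥ (A *ᵥ θ) = v ⬝ᵥ θ := by
    rw [dotProduct_mulVec, ← mulVec_transpose, hsym, hAy]
  have h0 : (0:ℝ) ≤ u ⬝ᵥ A *ᵥ u := by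
    simpa using hA.posSemidef.dotProduct_mulVec_nonneg u
  have hexp : u ⬝ᵥ A *ᵥ u
      = 4 * γ ^ 2 * (θ ⬝ᵥ A *ᵥ θ) - 4 * γ * (θ ⬝ᵥ v) + v ⬝ᵥ A⁻¹ *ᵥ v := by
    rw [hAu, hu]
    simp only [sub_dotProduct, dotProduct_sub, smul_dotProduct, dotProduct_smul,
      smul_eq_mul, h1]
    rw [dotProduct_comm v θ, dotProduct_comm (A⁻¹ *ᵥ v) v]
    ring
  rw [hexp] at h0
  rw [← sub_nonneg]
  have h5 : γ * (θ ⬝ᵥ A *ᵥ θ) + 1 / (4 * γ) * (v ⬝ᵥ A⁻¹ *ᵥ v) - θ ⬝ᵥ v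
      = (1 / (4 * γ)) * (4 * γ ^ 2 * (θ ⬝ᵥ A *ᵥ θ) - 4 * γ * (θ ⬝ᵥ v) + v ⬝ᵥ A⁻¹ *ᵥ v) := by
    field_simp
    ring
  rw [h5]
  exact mul_nonneg (by positivity) h0

private lemma decoupling_dot_aux {d : ℕ} (γ : ℝ) (hγ : 0 < γ) {ι : Type*}
    (s : Finset ι) (w : ι → ℝ) (hw : ∀ p ∈ s, 0 ≤ w p)
    (θ v : ι → (Fin d → ℝ)) :
    (∑ p ∈ s, w p * (θ p ⬝ᵥ v p))
      - γ * ∑ p ∈ s, ∑ q ∈ s, w p * w q * (θ p ⬝ᵥ v q) ^ 2 ≤ d / (4 * γ) := by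
  set T : ℝ := ∑ p ∈ s, w p * (θ p ⬝ᵥ θ p) with hT
  have hT0 : 0 ≤ T := Finset.sum_nonneg fun p hp =>
    mul_nonneg (hw p hp) (Finset.sum_nonneg fun i _ => mul_self_nonneg _)
  have key : ∀ ε : ℝ, 0 < ε →
      (∑ p ∈ s, w p * (θ p ⬝ᵥ v p))
        - γ * ∑ p ∈ s, ∑ q ∈ s, w p * w q * (θ p ⬝ᵥ v q) ^ 2
        ≤ d / (4 * γ) + γ * ε * T := by
    intro ε hε
    set M : Matrix (Fin d) (Fin d) ℝ :=
      ∑ q ∈ s, w q • vecMulVec (v q) (v q) with hMdef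
    set A : Matrix (Fin d) (Fin d) ℝ := M + ε • 1 with hAdef
    -- quadratic form of M
    have hsq : ∀ (q : ι) (x : Fin d → ℝ),
        w q * (x ⬝ᵥ v q) ^ 2 = ∑ i, ∑ j, w q * (x i * v q i) * (x j * v q j) := by
      intro q x
      rw [sq, dotProduct, Finset.sum_mul_sum, Finset.mul_sum]
      refine Finset.sum_congr rfl fun i _ => ?_
      rw [Finset.mul_sum]
      exact Finset.sum_congr rfl fun j _ => by ring
    have hquadM : ∀ x : Fin d → ℝ, x ⬝ᵥ M *ᵥ x = ∑ q ∈ s, w q * (x ⬝ᵥ v q) ^ 2 := by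
      intro x
      have expand : x ⬝ᵥ M *ᵥ x = ∑ i, ∑ j, x i * M i j * x j := by
        simp [dotProduct, mulVec, Finset.mul_sum, mul_assoc]
      have hMentry : ∀ i j, x i * M i j * x j
          = ∑ q ∈ s, w q * (x i * v q i) * (x j * v q j) := by
        intro i j
        simp only [hMdef, Matrix.sum_apply, Matrix.smul_apply, vecMulVec_apply,
          smul_eq_mul, Finset.sum_mul, Finset.mul_sum]
        exact Finset.sum_congr rfl fun q _ => by ring
      calc x ⬝ᵥ M *ᵥ x = ∑ i, ∑ j, ∑ q ∈ s, w q * (x i * v q i) * (x j * v q j) := by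
            rw [expand]; exact Finset.sum_congr rfl fun i _ =>
              Finset.sum_congr rfl fun j _ => hMentry i j
        _ = ∑ i, ∑ q ∈ s, ∑ j, w q * (x i * v q i) * (x j * v q j) :=
            Finset.sum_congr rfl fun i _ => Finset.sum_comm
        _ = ∑ q ∈ s, ∑ i, ∑ j, w q * (x i * v q i) * (x j * v q j) := Finset.sum_comm
        _ = ∑ q ∈ s, w q * (x ⬝ᵥ v q) ^ 2 :=
            Finset.sum_congr rfl fun q _ => (hsq q x).symm
    -- M is positive semidefinite
    have hMherm : M.IsHermitian := by
      show Mᴴ = M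
      ext i j
      simp only [conjTranspose_apply, star_trivial, hMdef, Matrix.sum_apply,
        Matrix.smul_apply, vecMulVec_apply, smul_eq_mul]
      exact Finset.sum_congr rfl fun q _ => by ring
    have hMpsd : M.PosSemidef := by
      refine Matrix.PosSemidef.of_dotProduct_mulVec_nonneg hMherm fun x => ?_
      simp only [star_trivial]
      rw [hquadM]
      exact Finset.sum_nonneg fun q hq => mul_nonneg (hw q hq) (sq_nonneg _)
    have hone : ((ε • 1 : Matrix (Fin d) (Fin d) ℝ)).PosDef := by
      rw [smul_one_eq_diagonal]
      exact posDef_diagonal_iff.2 fun _ => hε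
    have hA : A.PosDef := Matrix.PosDef.posSemidef_add hMpsd hone
    have hAinv : (A⁻¹).PosDef := hA.inv
    have hdet : IsUnit A.det := (Matrix.isUnit_iff_isUnit_det A).1 hA.isUnit
    have hIA : A⁻¹ * A = 1 := Matrix.nonsing_inv_mul A hdet
    -- trace bound
    have htr1 : ∀ p : ι, v p ⬝ᵥ A⁻¹ *ᵥ v p = trace (A⁻¹ * vecMulVec (v p) (v p)) := by
      intro p
      simp only [trace, diag_apply, Matrix.mul_apply, vecMulVec_apply, dotProduct, mulVec,
        Finset.mul_sum]
      exact Finset.sum_congr rfl fun i _ => Finset.sum_congr rfl fun j _ => by ring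
    have htrM : ∑ p ∈ s, w p * (v p ⬝ᵥ A⁻¹ *ᵥ v p) = trace (A⁻¹ * M) := by
      rw [hMdef, Matrix.mul_sum, trace_sum]
      refine Finset.sum_congr rfl fun p hp => ?_
      rw [htr1, Matrix.mul_smul, trace_smul, smul_eq_mul]
    have hdiag : 0 ≤ trace A⁻¹ := by
      apply Finset.sum_nonneg
      intro i _
      have hx : (Pi.single i 1 : Fin d → ℝ) ≠ 0 := by
        intro h
        have := congrFun h i
        simp at this
      have := hAinv.dotProduct_mulVec_pos hx
      simp only [star_trivial, single_dotProduct, one_mul] at this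
      have h2 : (A⁻¹ *ᵥ Pi.single i 1) i = A⁻¹ i i := by
        simp [mulVec, dotProduct_single]
      rw [h2] at this
      exact le_of_lt this
    have htrbound : ∑ p ∈ s, w p * (v p ⬝ᵥ A⁻¹ *ᵥ v p) ≤ (d : ℝ) := by
      rw [htrM]
      have hM_eq : M = A - ε • 1 := by rw [hAdef]; abel
      rw [hM_eq, Matrix.mul_sub, hIA, Matrix.mul_smul, Matrix.mul_one, trace_sub, trace_smul,
        trace_one]
      simp only [smul_eq_mul, Fintype.card_fin]
      nlinarith [mul_nonneg (le_of_lt hε) hdiag]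
    -- combine
    have step1 : ∀ p ∈ s, w p * (θ p ⬝ᵥ v p)
        ≤ w p * (γ * (θ p ⬝ᵥ A *ᵥ θ p) + (1 / (4 * γ)) * (v p ⬝ᵥ A⁻¹ *ᵥ v p)) :=
      fun p hp => mul_le_mul_of_nonneg_left (quad_dot_le γ hγ hA (θ p) (v p)) (hw p hp)
    have hquadA : ∀ p : ι, θ p ⬝ᵥ A *ᵥ θ p
        = (∑ q ∈ s, w q * (θ p ⬝ᵥ v q) ^ 2) + ε * (θ p ⬝ᵥ θ p) := by
      intro p
      rw [hAdef, add_mulVec, dotProduct_add, hquadM]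
      congr 1
      rw [smul_mulVec, one_mulVec, dotProduct_smul, smul_eq_mul]
    have hS : ∑ p ∈ s, w p * (θ p ⬝ᵥ A *ᵥ θ p)
        = (∑ p ∈ s, ∑ q ∈ s, w p * w q * (θ p ⬝ᵥ v q) ^ 2) + ε * T := by
      have h1 : ∑ p ∈ s, w p * (θ p ⬝ᵥ A *ᵥ θ p)
          = ∑ p ∈ s, ((∑ q ∈ s, w p * w q * (θ p ⬝ᵥ v q) ^ 2) + ε * (w p * (θ p ⬝ᵥ θ p))) := by
        refine Finset.sum_congr rfl fun p hp => ?_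
        rw [hquadA p, mul_add, Finset.mul_sum]
        congr 1
        · exact Finset.sum_congr rfl fun q _ => by ring
        · ring
      rw [h1, Finset.sum_add_distrib, ← Finset.mul_sum, hT]
    have hsplit : ∑ p ∈ s, w p * (γ * (θ p ⬝ᵥ A *ᵥ θ p) + (1 / (4 * γ)) * (v p ⬝ᵥ A⁻¹ *ᵥ v p))
        = γ * (∑ p ∈ s, w p * (θ p ⬝ᵥ A *ᵥ θ p))
          + (1 / (4 * γ)) * (∑ p ∈ s, w p * (v p ⬝ᵥ A⁻¹ *ᵥ v p)) := by
      rw [Finset.mul_sum, Finset.mul_sum, ← Finset.sum_add_distrib]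
      exact Finset.sum_congr rfl fun p hp => by ring
    have hmain := Finset.sum_le_sum step1
    rw [hsplit, hS] at hmain
    have h2 : (1 / (4 * γ)) * (∑ p ∈ s, w p * (v p ⬝ᵥ A⁻¹ *ᵥ v p))
        ≤ (1 / (4 * γ)) * (d : ℝ) :=
      mul_le_mul_of_nonneg_left htrbound (by positivity)
    have h3 : (1 / (4 * γ)) * (d : ℝ) = (d : ℝ) / (4 * γ) := by ring
    nlinarith [hmain, h2]
  -- let ε → 0
  refine le_of_forall_pos_le_add fun δ hδ => ?_
  have hε : 0 < δ / (γ * (T + 1)) := by positivity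
  have := key _ hε
  have h3 : γ * (δ / (γ * (T + 1))) * T ≤ δ := by
    have h5 : γ * (δ / (γ * (T + 1))) * T = δ * (T / (T + 1)) := by
      field_simp
    have h4 : T / (T + 1) ≤ 1 := by
      rw [div_le_one (by linarith)]
      linarith
    rw [h5]
    nlinarith
  linarith

/-- Corollary (dc-linear-max (2)): decoupling coefficient bound for the class of sums of
absolute values of linear functions. For any finitely supported distribution `ν` on
`ℝ^d × X` (given by a finite set `s` of atoms and weights `w`), the decoupled risk of the
class `F = { x ↦ Σ_i |⟨θ, φ_i(x)⟩| }` is at most `d/(4γ)`. -/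
theorem decoupling_sum_linear
    {X : Type*} [Nonempty X] (d : ℕ) (hd : 1 ≤ d) (n : ℕ) (hn : 1 ≤ n)
    (φ : Fin n → X → EuclideanSpace ℝ (Fin d))
    (γ : ℝ) (hγ : 0 < γ)
    (s : Finset (EuclideanSpace ℝ (Fin d) × X))
    (w : EuclideanSpace ℝ (Fin d) × X → ℝ)
    (hw_nonneg : ∀ p ∈ s, 0 ≤ w p)
    (hw_sum : ∑ p ∈ s, w p = 1) :
    (∑ p ∈ s, w p * ∑ i, |(inner ℝ p.1 (φ i p.2) : ℝ)|)
      - γ * ∑ p ∈ s, ∑ q ∈ s, w p * w q * (∑ i, |(inner ℝ p.1 (φ i q.2) : ℝ)|) ^ 2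
      ≤ d / (4 * γ) := by
    classical
  -- sign pattern
  set g : (EuclideanSpace ℝ (Fin d) × X) → Fin n → ℝ :=
    fun p i => if 0 ≤ (inner ℝ p.1 (φ i p.2) : ℝ) then 1 else -1 with hg
  set θ : (EuclideanSpace ℝ (Fin d) × X) → (Fin d → ℝ) := fun p k => p.1 k with hθ
  set v : (EuclideanSpace ℝ (Fin d) × X) → (Fin d → ℝ) :=
    fun q k => ∑ i, g q i * (φ i q.2) k with hv
  have hinner : ∀ (x : EuclideanSpace ℝ (Fin d)) (y : EuclideanSpace ℝ (Fin d)),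
      (inner ℝ x y : ℝ) = ∑ k, x k * y k := by
    intro x y
    simp [PiLp.inner_apply, RCLike.inner_apply, mul_comm]
  have hdot : ∀ p q, θ p ⬝ᵥ v q = ∑ i, g q i * (inner ℝ p.1 (φ i q.2) : ℝ) := by
    intro p q
    simp only [dotProduct, hθ, hv, Finset.mul_sum]
    rw [Finset.sum_comm]
    refine Finset.sum_congr rfl fun i _ => ?_
    rw [hinner, Finset.mul_sum]
    exact Finset.sum_congr rfl fun k _ => by ring
  have hgabs : ∀ p i, g p i * (inner ℝ p.1 (φ i p.2) : ℝ) = |(inner ℝ p.1 (φ i p.2) : ℝ)| := by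
    intro p i
    simp only [hg]
    rcases le_or_gt 0 ((inner ℝ p.1 (φ i p.2) : ℝ)) with h | h
    · rw [if_pos h, one_mul, abs_of_nonneg h]
    · rw [if_neg (not_le.2 h), neg_one_mul, abs_of_neg h]
  have hcoupled : ∀ p, θ p ⬝ᵥ v p = ∑ i, |(inner ℝ p.1 (φ i p.2) : ℝ)| := by
    intro p
    rw [hdot]
    exact Finset.sum_congr rfl fun i _ => hgabs p i
  have habs : ∀ p q, |θ p ⬝ᵥ v q| ≤ ∑ i, |(inner ℝ p.1 (φ i q.2) : ℝ)| := by
    intro p q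
    rw [hdot]
    refine (Finset.abs_sum_le_sum_abs _ _).trans ?_
    refine Finset.sum_le_sum fun i _ => ?_
    rw [abs_mul]
    have : |g q i| = 1 := by
      simp only [hg]
      split_ifs <;> simp
    rw [this, one_mul]
  have hsq : ∀ p q, (θ p ⬝ᵥ v q) ^ 2 ≤ (∑ i, |(inner ℝ p.1 (φ i q.2) : ℝ)|) ^ 2 := by
    intro p q
    rw [← sq_abs (θ p ⬝ᵥ v q)]
    exact pow_le_pow_left₀ (abs_nonneg _) (habs p q) 2
  have key := decoupling_dot_aux γ hγ s w hw_nonneg θ v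
  have hle : ∑ p ∈ s, ∑ q ∈ s, w p * w q * (θ p ⬝ᵥ v q) ^ 2
      ≤ ∑ p ∈ s, ∑ q ∈ s, w p * w q * (∑ i, |(inner ℝ p.1 (φ i q.2) : ℝ)|) ^ 2 := by
    refine Finset.sum_le_sum fun p hp => Finset.sum_le_sum fun q hq => ?_
    exact mul_le_mul_of_nonneg_left (hsq p q)
      (mul_nonneg (hw_nonneg p hp) (hw_nonneg q hq))
  have hcsum : ∑ p ∈ s, w p * ∑ i, |(inner ℝ p.1 (φ i p.2) : ℝ)|
      = ∑ p ∈ s, w p * (θ p ⬝ᵥ v p) :=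
    Finset.sum_congr rfl fun p _ => by rw [hcoupled]
  rw [hcsum]
  have := mul_le_mul_of_nonneg_left hle (le_of_lt hγ)
  linarith
end
end

section
/- Let 𝓜 be a finite nonempty model class. For every γ > 0, every α ∈ (0,1), and every μ̄ ∈ Δ(𝓜), one has dec_γ(𝓜, μ̄) ≤ α + (1−α) · edec_{γα/(1−α)}(𝓜, μ̄). Moreover edec_γ(𝓜, μ̄) ≤ dec_γ(𝓜, μ̄), and consequently edec̄_γ(𝓜) ≤ dec̄_γ(𝓜) ≤ α + (1−α) · edec̄_{γα/(1−α)}(𝓜) for every α ∈ (0,1). -/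
open MeasureTheory ProbabilityTheory

noncomputable section

variable {O : Type*} [MeasurableSpace O] {H : ℕ} {Pol : Type*}

/-- The set `Δ(ι)` of probability distributions on a finite set `ι`. -/
def ProbDist (ι : Type*) [Fintype ι] : Type _ :=
  {p : ι → ℝ // (∀ i, 0 ≤ p i) ∧ ∑ i, p i = 1}

variable [Fintype Pol] {ι : Type*} [Fintype ι]

/-- The Decision-Estimation Coefficient `dec_γ(𝓜, μ̄)` of the model class
`𝓜 = {Mdl i}` with optimal policies `πopt i`, with respect to `μ̄ ∈ Δ(𝓜)`. -/
def dec (γ : ℝ) (Mdl : ι → Model O H Pol) (πopt : ι → Pol) (μbar : ProbDist ι) : ℝ :=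
  ⨅ p : ProbDist Pol, ⨆ i : ι, ∑ π, p.1 π * ∑ j, μbar.1 j *
    ((Mdl i).val (πopt i) - (Mdl i).val π - γ * DRL2 (Mdl i) (Mdl j) π)

/-- `dec̄_γ(𝓜) = sup_{μ̄∈Δ(𝓜)} dec_γ(𝓜, μ̄)`. -/
def decBar (γ : ℝ) (Mdl : ι → Model O H Pol) (πopt : ι → Pol) : ℝ :=
  ⨆ μbar : ProbDist ι, dec γ Mdl πopt μbar

/-- The Explorative Decision-Estimation Coefficient `edec_γ(𝓜, μ̄)`. -/
def edec (γ : ℝ) (Mdl : ι → Model O H Pol) (πopt : ι → Pol) (μbar : ProbDist ι) : ℝ :=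
  ⨅ pexp : ProbDist Pol, ⨅ pout : ProbDist Pol, ⨆ i : ι,
    (∑ π, pout.1 π * ((Mdl i).val (πopt i) - (Mdl i).val π))
      - γ * ∑ π, pexp.1 π * ∑ j, μbar.1 j * DRL2 (Mdl i) (Mdl j) π

/-- `edec̄_γ(𝓜) = sup_{μ̄∈Δ(𝓜)} edec_γ(𝓜, μ̄)`. -/
def edecBar (γ : ℝ) (Mdl : ι → Model O H Pol) (πopt : ι → Pol) : ℝ :=
  ⨆ μbar : ProbDist ι, edec γ Mdl πopt μbar

/-! ### Auxiliary lemmas -/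

section Aux

lemma hellingerSq_nonneg' {Ω : Type*} [MeasurableSpace Ω] (P Q : Measure Ω) :
    0 ≤ hellingerSq P Q :=
  integral_nonneg fun _ => sq_nonneg _

lemma hellingerSq_le_two' {Ω : Type*} [MeasurableSpace Ω] (P Q : Measure Ω)
    [IsProbabilityMeasure P] [IsProbabilityMeasure Q] :
    hellingerSq P Q ≤ 2 := by
  rw [hellingerSq]
  set ν := P + Q with hν
  have hP : P ≪ ν := Measure.absolutelyContinuous_of_le (Measure.le_add_right le_rfl)
  have hQ : Q ≪ ν := Measure.absolutelyContinuous_of_le (Measure.le_add_left le_rfl)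
  have hPint : Integrable (fun x => (P.rnDeriv ν x).toReal) ν :=
    Measure.integrable_toReal_rnDeriv
  have hQint : Integrable (fun x => (Q.rnDeriv ν x).toReal) ν :=
    Measure.integrable_toReal_rnDeriv
  have h1 : ∫ x, (Real.sqrt ((P.rnDeriv ν x).toReal)
      - Real.sqrt ((Q.rnDeriv ν x).toReal)) ^ 2 ∂ν
      ≤ ∫ x, ((P.rnDeriv ν x).toReal + (Q.rnDeriv ν x).toReal) ∂ν := by
    apply integral_mono_of_nonneg
    · exact Filter.Eventually.of_forall fun x => sq_nonneg _
    · exact hPint.add hQint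
    · refine Filter.Eventually.of_forall fun x => ?_
      have ha : (0:ℝ) ≤ (P.rnDeriv ν x).toReal := ENNReal.toReal_nonneg
      have hb : (0:ℝ) ≤ (Q.rnDeriv ν x).toReal := ENNReal.toReal_nonneg
      have h1 := Real.sq_sqrt ha
      have h2 := Real.sq_sqrt hb
      have h3 := Real.sqrt_nonneg (P.rnDeriv ν x).toReal
      have h4 := Real.sqrt_nonneg (Q.rnDeriv ν x).toReal
      simp only []
      nlinarith [mul_nonneg h3 h4]
  have h2 : ∫ x, (P.rnDeriv ν x).toReal ∂ν = 1 := by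
    rw [Measure.integral_toReal_rnDeriv hP]; simp
  have h3 : ∫ x, (Q.rnDeriv ν x).toReal ∂ν = 1 := by
    rw [Measure.integral_toReal_rnDeriv hQ]; simp
  rw [integral_add hPint hQint, h2, h3] at h1
  linarith

variable {O : Type*} [MeasurableSpace O] {H : ℕ} {Pol : Type*}

lemma Model.val_nonneg (M : Model O H Pol) (π : Pol) : 0 ≤ M.val π :=
  integral_nonneg fun o => Finset.sum_nonneg fun h _ => M.R_nonneg o h

lemma Model.val_le_one (M : Model O H Pol) (π : Pol) : M.val π ≤ 1 := by
  haveI := M.prob π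
  have h : M.val π ≤ ∫ _, (1:ℝ) ∂(M.P π) := by
    apply integral_mono_of_nonneg
    · exact Filter.Eventually.of_forall fun o =>
        Finset.sum_nonneg fun h _ => M.R_nonneg o h
    · exact integrable_const 1
    · exact Filter.Eventually.of_forall fun o => M.sumR_le_one o
  simpa using h

lemma DRL2_nonneg (M M' : Model O H Pol) (π : Pol) : 0 ≤ DRL2 M M' π := by
  have h1 := hellingerSq_nonneg' (M.P π) (M'.P π)
  have h2 : (0:ℝ) ≤ ∫ o, (∑ h, (M.R o h - M'.R o h) ^ 2) ∂(M.P π) :=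
    integral_nonneg fun o => Finset.sum_nonneg fun h _ => sq_nonneg _
  rw [DRL2]; linarith

lemma DRL2_le (M M' : Model O H Pol) (π : Pol) : DRL2 M M' π ≤ 2 + H := by
  haveI := M.prob π
  haveI := M'.prob π
  have h1 := hellingerSq_le_two' (M.P π) (M'.P π)
  have h2 : ∫ o, (∑ h, (M.R o h - M'.R o h) ^ 2) ∂(M.P π) ≤ (H : ℝ) := by
    have h : ∫ o, (∑ h, (M.R o h - M'.R o h) ^ 2) ∂(M.P π)
        ≤ ∫ _, (H : ℝ) ∂(M.P π) := by
      apply integral_mono_of_nonneg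
      · exact Filter.Eventually.of_forall fun o =>
          Finset.sum_nonneg fun h _ => sq_nonneg _
      · exact integrable_const _
      · refine Filter.Eventually.of_forall fun o => ?_
        calc ∑ h, (M.R o h - M'.R o h) ^ 2 ≤ ∑ _h : Fin H, (1:ℝ) := by
              apply Finset.sum_le_sum
              intro h _
              have h1 := M.R_nonneg o h
              have h2 := M.R_le_one o h
              have h3 := M'.R_nonneg o h
              have h4 := M'.R_le_one o h
              nlinarith
          _ = (H : ℝ) := by simp
    simpa using h
  rw [DRL2]; linarith

variable [Fintype Pol] {ι : Type*} [Fintype ι]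

instance ProbDist.instNonempty {κ : Type*} [Fintype κ] [Nonempty κ] :
    Nonempty (ProbDist κ) := by
  classical
  obtain ⟨i0⟩ := ‹Nonempty κ›
  refine ⟨⟨fun i => if i = i0 then 1 else 0, fun i => by dsimp only; split <;> norm_num, ?_⟩⟩
  simp [Finset.sum_ite_eq']

lemma probDist_sum_le {κ : Type*} [Fintype κ] (p : ProbDist κ) {f : κ → ℝ} {b : ℝ}
    (h : ∀ i, f i ≤ b) : ∑ i, p.1 i * f i ≤ b := by
  calc ∑ i, p.1 i * f i ≤ ∑ i, p.1 i * b :=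
        Finset.sum_le_sum fun i _ => mul_le_mul_of_nonneg_left (h i) (p.2.1 i)
    _ = b := by rw [← Finset.sum_mul, p.2.2, one_mul]

lemma probDist_sum_nonneg {κ : Type*} [Fintype κ] (p : ProbDist κ) {f : κ → ℝ}
    (h : ∀ i, 0 ≤ f i) : 0 ≤ ∑ i, p.1 i * f i :=
  Finset.sum_nonneg fun i _ => mul_nonneg (p.2.1 i) (h i)

/-- Mixture of two probability distributions. -/
def ProbDist.mix {κ : Type*} [Fintype κ] (α : ℝ) (h0 : 0 ≤ α) (h1 : α ≤ 1)
    (p q : ProbDist κ) : ProbDist κ :=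
  ⟨fun i => α * p.1 i + (1 - α) * q.1 i,
    fun i => by dsimp only; nlinarith [p.2.1 i, q.2.1 i],
    by rw [Finset.sum_add_distrib, ← Finset.mul_sum, ← Finset.mul_sum, p.2.2, q.2.2]; ring⟩

/-- The exploration penalty `Σ_j μ̄_j D_RL²(M_i(π), M_j(π))`. -/
def DbarFn (Mdl : ι → Model O H Pol) (μbar : ProbDist ι) (i : ι) (π : Pol) : ℝ :=
  ∑ j, μbar.1 j * DRL2 (Mdl i) (Mdl j) π

lemma DbarFn_nonneg (Mdl : ι → Model O H Pol) (μbar : ProbDist ι) (i : ι) (π : Pol) :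
    0 ≤ DbarFn Mdl μbar i π :=
  probDist_sum_nonneg μbar fun j => DRL2_nonneg (Mdl i) (Mdl j) π

lemma DbarFn_le (Mdl : ι → Model O H Pol) (μbar : ProbDist ι) (i : ι) (π : Pol) :
    DbarFn Mdl μbar i π ≤ 2 + H :=
  probDist_sum_le μbar fun j => DRL2_le (Mdl i) (Mdl j) π

/-- Rewriting the inner sum in `dec`. -/
lemma dec_inner_eq (Mdl : ι → Model O H Pol) (πopt : ι → Pol) (μbar : ProbDist ι)
    (γ : ℝ) (i : ι) (p : ProbDist Pol) :
    ∑ π, p.1 π * ∑ j, μbar.1 j *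
        ((Mdl i).val (πopt i) - (Mdl i).val π - γ * DRL2 (Mdl i) (Mdl j) π)
      = (∑ π, p.1 π * ((Mdl i).val (πopt i) - (Mdl i).val π))
          - γ * ∑ π, p.1 π * DbarFn Mdl μbar i π := by
  have hinner : ∀ π : Pol, ∑ j, μbar.1 j *
      ((Mdl i).val (πopt i) - (Mdl i).val π - γ * DRL2 (Mdl i) (Mdl j) π)
      = ((Mdl i).val (πopt i) - (Mdl i).val π) - γ * DbarFn Mdl μbar i π := by
    intro π
    calc ∑ j, μbar.1 j *
          ((Mdl i).val (πopt i) - (Mdl i).val π - γ * DRL2 (Mdl i) (Mdl j) π)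
        = ∑ j, (μbar.1 j * ((Mdl i).val (πopt i) - (Mdl i).val π)
            - γ * (μbar.1 j * DRL2 (Mdl i) (Mdl j) π)) := by
          apply Finset.sum_congr rfl; intro j _; ring
      _ = (∑ j, μbar.1 j) * ((Mdl i).val (πopt i) - (Mdl i).val π)
            - γ * ∑ j, μbar.1 j * DRL2 (Mdl i) (Mdl j) π := by
          rw [Finset.sum_sub_distrib, ← Finset.sum_mul, ← Finset.mul_sum]
      _ = ((Mdl i).val (πopt i) - (Mdl i).val π) - γ * DbarFn Mdl μbar i π := by
          rw [μbar.2.2, one_mul, DbarFn]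
  calc ∑ π, p.1 π * ∑ j, μbar.1 j *
        ((Mdl i).val (πopt i) - (Mdl i).val π - γ * DRL2 (Mdl i) (Mdl j) π)
      = ∑ π, (p.1 π * ((Mdl i).val (πopt i) - (Mdl i).val π)
          - γ * (p.1 π * DbarFn Mdl μbar i π)) := by
        apply Finset.sum_congr rfl; intro π _; rw [hinner π]; ring
    _ = _ := by rw [Finset.sum_sub_distrib, ← Finset.mul_sum]

end Aux

section Main

variable {O : Type*} [MeasurableSpace O] {H : ℕ} {Pol : Type*} [MeasurableSpace O]
variable [Fintype Pol] {ι : Type*} [Fintype ι]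
variable [Nonempty Pol] [Nonempty ι]

/-- The body of `edec` (and, after rewriting, that of `dec`). -/
lemma term_bounds (Mdl : ι → Model O H Pol) (πopt : ι → Pol)
    (hπopt : ∀ (i : ι) (π : Pol), (Mdl i).val π ≤ (Mdl i).val (πopt i))
    {γ : ℝ} (hγ : 0 < γ) (μbar : ProbDist ι) (pexp pout : ProbDist Pol) (i : ι) :
    -(γ * (2 + H)) ≤ (∑ π, pout.1 π * ((Mdl i).val (πopt i) - (Mdl i).val π))
        - γ * ∑ π, pexp.1 π * DbarFn Mdl μbar i π
      ∧ (∑ π, pout.1 π * ((Mdl i).val (πopt i) - (Mdl i).val π))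
        - γ * ∑ π, pexp.1 π * DbarFn Mdl μbar i π ≤ 1 := by
  have hg0 : 0 ≤ ∑ π, pout.1 π * ((Mdl i).val (πopt i) - (Mdl i).val π) :=
    probDist_sum_nonneg pout fun π => sub_nonneg.2 (hπopt i π)
  have hg1 : ∑ π, pout.1 π * ((Mdl i).val (πopt i) - (Mdl i).val π) ≤ 1 :=
    probDist_sum_le pout fun π => by
      have h1 := Model.val_le_one (Mdl i) (πopt i)
      have h2 := Model.val_nonneg (Mdl i) π
      linarith
  have hD0 : 0 ≤ ∑ π, pexp.1 π * DbarFn Mdl μbar i π :=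
    probDist_sum_nonneg pexp fun π => DbarFn_nonneg Mdl μbar i π
  have hD1 : ∑ π, pexp.1 π * DbarFn Mdl μbar i π ≤ 2 + H :=
    probDist_sum_le pexp fun π => DbarFn_le Mdl μbar i π
  constructor
  · nlinarith
  · nlinarith

/-- `edec` expressed via `DbarFn` (definitional). -/
lemma edec_eq (γ : ℝ) (Mdl : ι → Model O H Pol) (πopt : ι → Pol) (μbar : ProbDist ι) :
    edec γ Mdl πopt μbar = ⨅ pexp : ProbDist Pol, ⨅ pout : ProbDist Pol, ⨆ i : ι,
      ((∑ π, pout.1 π * ((Mdl i).val (πopt i) - (Mdl i).val π))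
        - γ * ∑ π, pexp.1 π * DbarFn Mdl μbar i π) := rfl

lemma edec_le_body (Mdl : ι → Model O H Pol) (πopt : ι → Pol)
    (hπopt : ∀ (i : ι) (π : Pol), (Mdl i).val π ≤ (Mdl i).val (πopt i))
    {γ : ℝ} (hγ : 0 < γ) (μbar : ProbDist ι) (pexp pout : ProbDist Pol) :
    edec γ Mdl πopt μbar ≤ ⨆ i : ι,
      ((∑ π, pout.1 π * ((Mdl i).val (πopt i) - (Mdl i).val π))
        - γ * ∑ π, pexp.1 π * DbarFn Mdl μbar i π) := by
  have hlow : ∀ p q : ProbDist Pol, -(γ * (2 + H)) ≤ ⨆ i : ι,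
      ((∑ π, q.1 π * ((Mdl i).val (πopt i) - (Mdl i).val π))
        - γ * ∑ π, p.1 π * DbarFn Mdl μbar i π) := by
    intro p q
    obtain ⟨i0⟩ := ‹Nonempty ι›
    refine le_trans (term_bounds Mdl πopt hπopt hγ μbar p q i0).1 ?_
    exact le_ciSup (f := fun i : ι =>
      ((∑ π, q.1 π * ((Mdl i).val (πopt i) - (Mdl i).val π))
        - γ * ∑ π, p.1 π * DbarFn Mdl μbar i π))
      (Set.Finite.bddAbove (Set.finite_range _)) i0
  rw [edec_eq]
  have hb2 : BddBelow (Set.range fun pout : ProbDist Pol => ⨆ i : ι,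
      ((∑ π, pout.1 π * ((Mdl i).val (πopt i) - (Mdl i).val π))
        - γ * ∑ π, pexp.1 π * DbarFn Mdl μbar i π)) :=
    ⟨-(γ * (2 + H)), by rintro x ⟨q, rfl⟩; exact hlow pexp q⟩
  have hb1 : BddBelow (Set.range fun p : ProbDist Pol => ⨅ pout : ProbDist Pol, ⨆ i : ι,
      ((∑ π, pout.1 π * ((Mdl i).val (πopt i) - (Mdl i).val π))
        - γ * ∑ π, p.1 π * DbarFn Mdl μbar i π)) :=
    ⟨-(γ * (2 + H)), by rintro x ⟨p, rfl⟩; exact le_ciInf fun q => hlow p q⟩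
  exact le_trans (ciInf_le hb1 pexp) (ciInf_le hb2 pout)

lemma dec_le_body (Mdl : ι → Model O H Pol) (πopt : ι → Pol)
    (hπopt : ∀ (i : ι) (π : Pol), (Mdl i).val π ≤ (Mdl i).val (πopt i))
    {γ : ℝ} (hγ : 0 < γ) (μbar : ProbDist ι) (p : ProbDist Pol) :
    dec γ Mdl πopt μbar ≤ ⨆ i : ι,
      ((∑ π, p.1 π * ((Mdl i).val (πopt i) - (Mdl i).val π))
        - γ * ∑ π, p.1 π * DbarFn Mdl μbar i π) := by
  rw [dec]
  have hrw : ∀ q : ProbDist Pol, (⨆ i : ι, ∑ π, q.1 π * ∑ j, μbar.1 j *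
      ((Mdl i).val (πopt i) - (Mdl i).val π - γ * DRL2 (Mdl i) (Mdl j) π))
      = ⨆ i : ι, ((∑ π, q.1 π * ((Mdl i).val (πopt i) - (Mdl i).val π))
        - γ * ∑ π, q.1 π * DbarFn Mdl μbar i π) := by
    intro q
    exact iSup_congr fun i => dec_inner_eq Mdl πopt μbar γ i q
  have hbdd : BddBelow (Set.range fun q : ProbDist Pol =>
      ⨆ i : ι, ∑ π, q.1 π * ∑ j, μbar.1 j *
        ((Mdl i).val (πopt i) - (Mdl i).val π - γ * DRL2 (Mdl i) (Mdl j) π)) := by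
    refine ⟨-(γ * (2 + H)), ?_⟩
    rintro x ⟨q, rfl⟩
    dsimp only
    rw [hrw q]
    obtain ⟨i0⟩ := ‹Nonempty ι›
    refine le_trans (term_bounds Mdl πopt hπopt hγ μbar q q i0).1 ?_
    exact le_ciSup (f := fun i : ι =>
      ((∑ π, q.1 π * ((Mdl i).val (πopt i) - (Mdl i).val π))
        - γ * ∑ π, q.1 π * DbarFn Mdl μbar i π))
      (Set.Finite.bddAbove (Set.finite_range _)) i0
  exact le_trans (ciInf_le hbdd p) (le_of_eq (hrw p))

lemma edec_le_dec' (Mdl : ι → Model O H Pol) (πopt : ι → Pol)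
    (hπopt : ∀ (i : ι) (π : Pol), (Mdl i).val π ≤ (Mdl i).val (πopt i))
    {γ : ℝ} (hγ : 0 < γ) (μbar : ProbDist ι) :
    edec γ Mdl πopt μbar ≤ dec γ Mdl πopt μbar := by
  rw [dec]
  refine le_ciInf fun p => ?_
  exact le_trans (edec_le_body Mdl πopt hπopt hγ μbar p p)
    (le_of_eq (iSup_congr fun i => (dec_inner_eq Mdl πopt μbar γ i p).symm))

lemma edec_le_one' (Mdl : ι → Model O H Pol) (πopt : ι → Pol)
    (hπopt : ∀ (i : ι) (π : Pol), (Mdl i).val π ≤ (Mdl i).val (πopt i))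
    {γ : ℝ} (hγ : 0 < γ) (μbar : ProbDist ι) :
    edec γ Mdl πopt μbar ≤ 1 := by
  obtain ⟨p0⟩ := (inferInstance : Nonempty (ProbDist Pol))
  refine le_trans (edec_le_body Mdl πopt hπopt hγ μbar p0 p0) ?_
  exact ciSup_le fun i => (term_bounds Mdl πopt hπopt hγ μbar p0 p0 i).2

lemma dec_le_one' (Mdl : ι → Model O H Pol) (πopt : ι → Pol)
    (hπopt : ∀ (i : ι) (π : Pol), (Mdl i).val π ≤ (Mdl i).val (πopt i))
    {γ : ℝ} (hγ : 0 < γ) (μbar : ProbDist ι) :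
    dec γ Mdl πopt μbar ≤ 1 := by
  obtain ⟨p0⟩ := (inferInstance : Nonempty (ProbDist Pol))
  refine le_trans (dec_le_body Mdl πopt hπopt hγ μbar p0) ?_
  exact ciSup_le fun i => (term_bounds Mdl πopt hπopt hγ μbar p0 p0 i).2

lemma dec_le_edec' (Mdl : ι → Model O H Pol) (πopt : ι → Pol)
    (hπopt : ∀ (i : ι) (π : Pol), (Mdl i).val π ≤ (Mdl i).val (πopt i))
    {γ : ℝ} (hγ : 0 < γ) {α : ℝ} (hα0 : 0 < α) (hα1 : α < 1) (μbar : ProbDist ι) :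
    dec γ Mdl πopt μbar ≤ α + (1 - α) * edec (γ * α / (1 - α)) Mdl πopt μbar := by
  have h1α : 0 < 1 - α := by linarith
  set γ' := γ * α / (1 - α) with hγ'def
  have hγ' : 0 < γ' := div_pos (mul_pos hγ hα0) h1α
  have key : ∀ pexp pout : ProbDist Pol,
      dec γ Mdl πopt μbar ≤ α + (1 - α) * (⨆ i : ι,
        ((∑ π, pout.1 π * ((Mdl i).val (πopt i) - (Mdl i).val π))
          - γ' * ∑ π, pexp.1 π * DbarFn Mdl μbar i π)) := by
    intro pexp pout
    set p := ProbDist.mix α hα0.le hα1.le pexp pout with hp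
    refine le_trans (dec_le_body Mdl πopt hπopt hγ μbar p) ?_
    refine ciSup_le fun i => ?_
    have hmix : ∀ f : Pol → ℝ, ∑ π, p.1 π * f π
        = α * ∑ π, pexp.1 π * f π + (1 - α) * ∑ π, pout.1 π * f π := by
      intro f
      rw [hp]
      simp only [ProbDist.mix, Finset.mul_sum]
      rw [← Finset.sum_add_distrib]
      apply Finset.sum_congr rfl; intro π _; ring
    have hlast := le_ciSup (f := fun i : ι =>
        ((∑ π, pout.1 π * ((Mdl i).val (πopt i) - (Mdl i).val π))
          - γ' * ∑ π, pexp.1 π * DbarFn Mdl μbar i π))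
      (Set.Finite.bddAbove (Set.finite_range _)) i
    have hA0 : 0 ≤ ∑ π, pexp.1 π * ((Mdl i).val (πopt i) - (Mdl i).val π) :=
      probDist_sum_nonneg pexp fun π => sub_nonneg.2 (hπopt i π)
    have hA1 : ∑ π, pexp.1 π * ((Mdl i).val (πopt i) - (Mdl i).val π) ≤ 1 :=
      probDist_sum_le pexp fun π => by
        have h1 := Model.val_le_one (Mdl i) (πopt i)
        have h2 := Model.val_nonneg (Mdl i) π
        linarith
    have hY0 : 0 ≤ ∑ π, pout.1 π * DbarFn Mdl μbar i π :=
      probDist_sum_nonneg pout fun π => DbarFn_nonneg Mdl μbar i π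
    have hγγ' : (1 - α) * γ' = γ * α := by
      rw [hγ'def]; field_simp
    rw [hmix, hmix]
    have hstep : α * ∑ π, pexp.1 π * ((Mdl i).val (πopt i) - (Mdl i).val π)
          + (1 - α) * ∑ π, pout.1 π * ((Mdl i).val (πopt i) - (Mdl i).val π)
          - γ * (α * ∑ π, pexp.1 π * DbarFn Mdl μbar i π
            + (1 - α) * ∑ π, pout.1 π * DbarFn Mdl μbar i π)
        ≤ α + (1 - α) * ((∑ π, pout.1 π * ((Mdl i).val (πopt i) - (Mdl i).val π))
          - γ' * ∑ π, pexp.1 π * DbarFn Mdl μbar i π) := by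
      have hexp : (1 - α) * ((∑ π, pout.1 π * ((Mdl i).val (πopt i) - (Mdl i).val π))
          - γ' * ∑ π, pexp.1 π * DbarFn Mdl μbar i π)
          = (1 - α) * ∑ π, pout.1 π * ((Mdl i).val (πopt i) - (Mdl i).val π)
            - γ * α * ∑ π, pexp.1 π * DbarFn Mdl μbar i π := by
        rw [mul_sub, ← mul_assoc, hγγ']
      rw [hexp]
      nlinarith [mul_nonneg (mul_nonneg hγ.le h1α.le) hY0, mul_nonneg hα0.le (sub_nonneg.2 hA1)]
    exact le_trans hstep (by nlinarith [mul_le_mul_of_nonneg_left hlast h1α.le])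
  have hq : (dec γ Mdl πopt μbar - α) / (1 - α) ≤ edec γ' Mdl πopt μbar := by
    rw [edec_eq]
    refine le_ciInf fun pexp => le_ciInf fun pout => ?_
    rw [div_le_iff₀ h1α]
    have := key pexp pout
    nlinarith
  rw [div_le_iff₀ h1α] at hq
  nlinarith

end Main

/-- Proposition (eec-to-dec): relationship between the DEC and the Explorative DEC. -/
theorem dec_le_edec_and_edec_le_dec
    [Nonempty Pol] [Nonempty ι] (hH : 1 ≤ H)
    (Mdl : ι → Model O H Pol) (πopt : ι → Pol)
    (hπopt : ∀ (i : ι) (π : Pol), (Mdl i).val π ≤ (Mdl i).val (πopt i))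
    (γ : ℝ) (hγ : 0 < γ) (α : ℝ) (hα0 : 0 < α) (hα1 : α < 1) :
    (∀ μbar : ProbDist ι,
        dec γ Mdl πopt μbar ≤ α + (1 - α) * edec (γ * α / (1 - α)) Mdl πopt μbar)
    ∧ (∀ μbar : ProbDist ι, edec γ Mdl πopt μbar ≤ dec γ Mdl πopt μbar)
    ∧ edecBar γ Mdl πopt ≤ decBar γ Mdl πopt
    ∧ decBar γ Mdl πopt ≤ α + (1 - α) * edecBar (γ * α / (1 - α)) Mdl πopt := by
  have h1α : 0 < 1 - α := by linarith
  have hγ' : 0 < γ * α / (1 - α) := div_pos (mul_pos hγ hα0) h1α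
  refine ⟨fun μbar => dec_le_edec' Mdl πopt hπopt hγ hα0 hα1 μbar,
    fun μbar => edec_le_dec' Mdl πopt hπopt hγ μbar, ?_, ?_⟩
  · rw [edecBar, decBar]
    refine ciSup_mono ?_ fun μbar => edec_le_dec' Mdl πopt hπopt hγ μbar
    exact ⟨1, by rintro x ⟨μbar, rfl⟩; exact dec_le_one' Mdl πopt hπopt hγ μbar⟩
  · rw [decBar]
    refine ciSup_le fun μbar => ?_
    refine le_trans (dec_le_edec' Mdl πopt hπopt hγ hα0 hα1 μbar) ?_
    have hle : edec (γ * α / (1 - α)) Mdl πopt μbar ≤ edecBar (γ * α / (1 - α)) Mdl πopt :=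
      le_ciSup ⟨1, by rintro x ⟨ν, rfl⟩; exact edec_le_one' Mdl πopt hπopt hγ' ν⟩ μbar
    nlinarith
end
end
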